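/- arXiv:1907.07343 — 7 statements merged into one kernel-verified Lean document; each statement's English description precedes it below -/
import Mathlib

section
/- Let (E, D) be a Hausdorff topological space whose topology is generated by a saturated family of pseudometrics D = {d_a}_{a∈A} and which is sequentially complete. Let F ⊆ E be sequentially complete, and let T : F → F be an L-local contraction: there is C ⊆ ℝ₊^A containing D(F) = {a ↦ d_a(x,y) : x,y ∈ F} and an operator L : C → ℝ₊^A with d_a(Tx, Ty) ≤ (L d^{x,y})(a) for all x,y ∈ F, a ∈ A. Assume: (I) C is closed under addition, downward closed (d ≤ d' ∈ C implies d ∈ C), and bounded countable chains in C have suprema in C; (II) L0 = 0; (III) L is monotone; (IV) L is subadditive; (V) L is upper semicontinuous sup-preserving: L(sup_t d_t) ≤ sup_t L d_t for bounded countable chains; (VI) there are x₀ ∈ F and r₀ ∈ C with d_a(x₀, Tx₀) ≤ r₀(a) and R₀(a) := Σ_{t=0}^∞ (L^t r₀)(a) < ∞ for all a. Then T has a unique fixed point x* in V_F(x₀, R₀) = {x ∈ F : d_a(x₀,x) ≤ R₀(a) for all a}, and x* is the limit of any iterating sequence y_{t+1} = T y_t starting from any y₀ ∈ V_F(x₀,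 R₀). -/
open Filter Topology

/-- **Fixed point theorem for L-local contractions.**
Let `(E, D)` be a Hausdorff (saturated family) sequentially complete topological space whose
topology is generated by a family of pseudometrics `d a`, `F ⊆ E` sequentially complete,
`T : F → F` an `L`-local contraction with contraction operator parameter `L : C → ℝ₊^A`
satisfying (I)–(VI).  Then `T` has a unique fixed point `x*` in
`V_F(x₀, R₀) = {x ∈ F : ∀ a, d a x₀ x ≤ R₀ a}`, where `R₀ a = Σ_t (L^t r₀) a`, and `x*` is
the limit of any iterating sequence starting in `V_F(x₀, R₀)`. -/
theorem stmt0 {E A : Type*} (d : A → E → E → ℝ)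
    (hd_nonneg : ∀ a x y, 0 ≤ d a x y)
    (hd_refl : ∀ a x, d a x x = 0)
    (hd_symm : ∀ a x y, d a x y = d a y x)
    (hd_tri : ∀ a x y z, d a x z ≤ d a x y + d a y z)
    (hd_sat : ∀ x y, (∀ a, d a x y = 0) → x = y)
    (hE_complete : ∀ u : ℕ → E,
      (∀ a, ∀ ε > (0:ℝ), ∃ N, ∀ m n, N ≤ m → N ≤ n → d a (u m) (u n) < ε) →
      ∃ x : E, ∀ a, Tendsto (fun n => d a (u n) x) atTop (𝓝 0))
    (F : Set E)
    (hF_complete : ∀ u : ℕ → E, (∀ n, u n ∈ F) →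
      (∀ a, ∀ ε > (0:ℝ), ∃ N, ∀ m n, N ≤ m → N ≤ n → d a (u m) (u n) < ε) →
      ∃ x ∈ F, ∀ a, Tendsto (fun n => d a (u n) x) atTop (𝓝 0))
    (T : E → E) (hT : ∀ x ∈ F, T x ∈ F)
    (C : Set (A → ℝ)) (hC_nonneg : ∀ p ∈ C, ∀ a, 0 ≤ p a)
    -- `D(F) ⊆ C`
    (hDF : ∀ x ∈ F, ∀ y ∈ F, (fun a => d a x y) ∈ C)
    (L : (A → ℝ) → (A → ℝ)) (hL_into : ∀ p ∈ C, L p ∈ C)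
    -- `T` is an `L`-local contraction on `F`
    (hL_contr : ∀ x ∈ F, ∀ y ∈ F, ∀ a, d a (T x) (T y) ≤ L (fun b => d b x y) a)
    -- (I)
    (hC_add : ∀ p ∈ C, ∀ q ∈ C, (fun a => p a + q a) ∈ C)
    (hC_down : ∀ p : A → ℝ, ∀ q ∈ C, (∀ a, 0 ≤ p a) → (∀ a, p a ≤ q a) → p ∈ C)
    (hC_chain : ∀ u : ℕ → (A → ℝ), (∀ n, u n ∈ C) → (∀ n a, u n a ≤ u (n+1) a) →
      (∃ q ∈ C, ∀ n a, u n a ≤ q a) → (fun a => ⨆ n, u n a) ∈ C)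
    -- (II)
    (hL0 : L (fun _ => 0) = (fun _ => 0))
    -- (III)
    (hL_mono : ∀ p ∈ C, ∀ q ∈ C, (∀ a, p a ≤ q a) → ∀ a, L p a ≤ L q a)
    -- (IV)
    (hL_sub : ∀ p ∈ C, ∀ q ∈ C, ∀ a, L (fun b => p b + q b) a ≤ L p a + L q a)
    -- (V)
    (hL_sup : ∀ u : ℕ → (A → ℝ), (∀ n, u n ∈ C) → (∀ n a, u n a ≤ u (n+1) a) →
      (∃ q ∈ C, ∀ n a, u n a ≤ q a) →
      ∀ a, L (fun b => ⨆ n, u n b) a ≤ ⨆ n, L (u n) a)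
    -- (VI)
    (x₀ : E) (hx₀ : x₀ ∈ F) (r₀ : A → ℝ) (hr₀ : r₀ ∈ C)
    (hr₀d : ∀ a, d a x₀ (T x₀) ≤ r₀ a)
    (hR₀ : ∀ a, Summable (fun t => L^[t] r₀ a)) :
    ∃ x : E,
      ((x ∈ F ∧ ∀ a, d a x₀ x ≤ ∑' t, L^[t] r₀ a) ∧ T x = x) ∧
      (∀ y, (y ∈ F ∧ ∀ a, d a x₀ y ≤ ∑' t, L^[t] r₀ a) → T y = y → y = x) ∧
      (∀ y₀, (y₀ ∈ F ∧ ∀ a, d a x₀ y₀ ≤ ∑' t, L^[t] r₀ a) →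
        ∀ a, Tendsto (fun n => d a (T^[n] y₀) x) atTop (𝓝 0)) := by

  classical
  -- iterates of L stay in C and are nonnegative
  have hsC : ∀ t, L^[t] r₀ ∈ C := by
    intro t
    induction t with
    | zero => simpa using hr₀
    | succ t ih => rw [Function.iterate_succ_apply']; exact hL_into _ ih
  have hs0 : ∀ t a, 0 ≤ L^[t] r₀ a := fun t a => hC_nonneg _ (hsC t) a
  have hsum : ∀ n a, Summable fun t => L^[n + t] r₀ a := by
    intro n a
    have h1 : Summable fun t => L^[t + n] r₀ a :=
      (summable_nat_add_iff n).2 (hR₀ a)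
    exact h1.congr fun t => by rw [add_comm]
  set S : ℕ → A → ℝ := fun n a => ∑' t, L^[n + t] r₀ a with hSdef
  have hS_nonneg : ∀ n a, 0 ≤ S n a := fun n a => tsum_nonneg fun t => hs0 _ a
  have hS_split : ∀ n k a,
      S n a = (∑ t ∈ Finset.range k, L^[n + t] r₀ a) + S (n + k) a := by
    intro n k a
    have h := Summable.sum_add_tsum_nat_add (f := fun t => L^[n + t] r₀ a) k (hsum n a)
    have h2 : ∀ i : ℕ, n + (i + k) = n + k + i := fun i => by omega
    simp only [h2] at h
    simp only [hSdef]
    linarith [h]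
  have hS_tendsto : ∀ a, Tendsto (fun n => S n a) atTop (𝓝 0) := by
    intro a
    have h := tendsto_sum_nat_add (fun t => L^[t] r₀ a)
    have he : (fun n => S n a) = fun i => ∑' k, L^[k + i] r₀ a := by
      funext i
      simp only [hSdef]
      exact tsum_congr fun k => by rw [add_comm]
    rw [he]; exact h
  have hS_anti : ∀ n k a, S (n + k) a ≤ S n a := by
    intro n k a
    rw [hS_split n k a]
    have h0 : 0 ≤ ∑ t ∈ Finset.range k, L^[n + t] r₀ a :=
      Finset.sum_nonneg fun t _ => hs0 _ a
    linarith
  have hzeroC : (fun _ : A => (0:ℝ)) ∈ C :=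
    hC_down _ r₀ hr₀ (fun a => le_refl 0) (fun a => hC_nonneg r₀ hr₀ a)
  have hQC : ∀ n k, (fun a => ∑ t ∈ Finset.range k, L^[n + t] r₀ a) ∈ C := by
    intro n k
    induction k with
    | zero => simpa using hzeroC
    | succ k ih =>
      have he : (fun a => ∑ t ∈ Finset.range (k+1), L^[n + t] r₀ a)
          = fun a => (∑ t ∈ Finset.range k, L^[n + t] r₀ a) + L^[n + k] r₀ a := by
        funext a; rw [Finset.sum_range_succ]
      rw [he]
      exact hC_add _ ih _ (hsC _)
  have hQ_le_S : ∀ n k a, (∑ t ∈ Finset.range k, L^[n + t] r₀ a) ≤ S n a := by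
    intro n k a
    rw [hS_split n k a]
    linarith [hS_nonneg (n+k) a]
  have hLQ : ∀ n k a, L (fun b => ∑ t ∈ Finset.range k, L^[n + t] r₀ b) a
      ≤ ∑ t ∈ Finset.range k, L^[(n+1) + t] r₀ a := by
    intro n k
    induction k with
    | zero =>
      intro a
      have he : (fun b => ∑ t ∈ Finset.range 0, L^[n + t] r₀ b) = fun _ : A => (0:ℝ) := by
        funext b; simp
      rw [he, hL0]
      simp
    | succ k ih =>
      intro a
      have he : (fun b => ∑ t ∈ Finset.range (k+1), L^[n + t] r₀ b)
          = fun b => (∑ t ∈ Finset.range k, L^[n + t] r₀ b) + L^[n + k] r₀ b := by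
        funext b; rw [Finset.sum_range_succ]
      rw [he]
      have h1 := hL_sub _ (hQC n k) _ (hsC (n+k)) a
      have h2 : L (L^[n + k] r₀) a = L^[(n+1) + k] r₀ a := by
        rw [show (n+1) + k = (n + k) + 1 by omega, Function.iterate_succ_apply']
      calc L (fun b => (∑ t ∈ Finset.range k, L^[n + t] r₀ b) + L^[n + k] r₀ b) a
        ≤ L (fun b => ∑ t ∈ Finset.range k, L^[n + t] r₀ b) a + L (L^[n+k] r₀) a := h1
        _ ≤ (∑ t ∈ Finset.range k, L^[(n+1) + t] r₀ a) + L^[(n+1)+k] r₀ a :=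
            add_le_add (ih a) (le_of_eq h2)
        _ = ∑ t ∈ Finset.range (k+1), L^[(n+1) + t] r₀ a := (Finset.sum_range_succ _ _).symm
  -- the key lemma: L maps {p ∈ C : p ≤ S n} into {q : q ≤ S (n+1)}
  have hKey : ∀ p ∈ C, ∀ n, (∀ a, p a ≤ S n a) → ∀ a, L p a ≤ S (n+1) a := by
    intro p hp n hpn a
    have hp0 : ∀ b, 0 ≤ p b := hC_nonneg p hp
    set u : ℕ → A → ℝ := fun k b => max (p b - S (n + k) b) 0 with hu
    have hubdd : ∀ k b, u k b ≤ p b := fun k b =>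
      max_le (by linarith [hS_nonneg (n+k) b]) (hp0 b)
    have huC : ∀ k, u k ∈ C := fun k =>
      hC_down _ p hp (fun b => le_max_right _ _) (fun b => hubdd k b)
    have humono : ∀ k b, u k b ≤ u (k+1) b := by
      intro k b
      have hS' : S (n + (k+1)) b ≤ S (n + k) b := by
        have := hS_anti (n+k) 1 b
        rw [show n + k + 1 = n + (k+1) by omega] at this
        exact this
      exact max_le_max (by linarith) le_rfl
    have husup : ∀ b, (⨆ k, u k b) = p b := by
      intro b
      have hmono : Monotone fun k => u k b := monotone_nat_of_le_succ fun k => humono k b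
      have hb : BddAbove (Set.range fun k => u k b) :=
        ⟨p b, by rintro x ⟨k, rfl⟩; exact hubdd k b⟩
      have ht1 : Tendsto (fun k => u k b) atTop (𝓝 (⨆ k, u k b)) :=
        tendsto_atTop_ciSup hmono hb
      have hS' : Tendsto (fun k => S (n + k) b) atTop (𝓝 0) := by
        have h := (hS_tendsto b).comp (tendsto_add_atTop_nat n)
        have he : (fun k => S (n + k) b) = fun k => S (k + n) b :=
          funext fun k => by rw [add_comm]
        rw [he]; exact h
      have ht2 : Tendsto (fun k => u k b) atTop (𝓝 (p b)) := by
        have h1 : Tendsto (fun k => p b - S (n + k) b) atTop (𝓝 (p b - 0)) :=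
          tendsto_const_nhds.sub hS'
        rw [sub_zero] at h1
        have h2 : Tendsto (fun k => max (p b - S (n + k) b) 0) atTop (𝓝 (max (p b) 0)) :=
          h1.max tendsto_const_nhds
        rw [max_eq_left (hp0 b)] at h2
        exact h2
      exact tendsto_nhds_unique ht1 ht2
    have hLsup := hL_sup u huC humono ⟨p, hp, fun k b => hubdd k b⟩ a
    have he : (fun b => ⨆ k, u k b) = p := funext husup
    rw [he] at hLsup
    refine le_trans hLsup (ciSup_le fun k => ?_)
    have huk_le : ∀ b, u k b ≤ ∑ t ∈ Finset.range k, L^[n + t] r₀ b := by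
      intro b
      refine max_le ?_ (Finset.sum_nonneg fun t _ => hs0 _ b)
      have hb := hpn b
      rw [hS_split n k b] at hb
      linarith
    have h1 := hL_mono _ (huC k) _ (hQC n k) huk_le a
    exact le_trans h1 (le_trans (hLQ n k a) (hQ_le_S (n+1) k a))
  -- the iterating sequence from x₀
  set x_ : ℕ → E := fun n => T^[n] x₀ with hx_
  have hxF : ∀ n, x_ n ∈ F := by
    intro n
    induction n with
    | zero => simpa [hx_] using hx₀
    | succ n ih =>
      have he : x_ (n+1) = T (x_ n) := by
        simp only [hx_]; exact Function.iterate_succ_apply' T n x₀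
      rw [he]; exact hT _ ih
  have hxsucc : ∀ n, x_ (n+1) = T (x_ n) := by
    intro n; simp only [hx_]; exact Function.iterate_succ_apply' T n x₀
  have hstep : ∀ n a, d a (x_ n) (x_ (n+1)) ≤ L^[n] r₀ a := by
    intro n
    induction n with
    | zero => intro a; simpa [hx_] using hr₀d a
    | succ n ih =>
      intro a
      rw [hxsucc (n+1)]
      nth_rewrite 1 [hxsucc n]
      have h3 := hL_contr _ (hxF n) _ (hxF (n+1)) a
      have h4 := hL_mono _ (hDF _ (hxF n) _ (hxF (n+1))) _ (hsC n) ih a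
      rw [Function.iterate_succ_apply']
      exact le_trans h3 h4
  have hdist : ∀ n k a, d a (x_ n) (x_ (n+k)) ≤ ∑ t ∈ Finset.range k, L^[n + t] r₀ a := by
    intro n k
    induction k with
    | zero => intro a; simp [hd_refl]
    | succ k ih =>
      intro a
      calc d a (x_ n) (x_ (n+(k+1)))
          ≤ d a (x_ n) (x_ (n+k)) + d a (x_ (n+k)) (x_ (n+k+1)) := by
            have := hd_tri a (x_ n) (x_ (n+k)) (x_ (n+(k+1)))
            rw [show n + (k+1) = n + k + 1 by omega]
            rw [show n + (k+1) = n + k + 1 by omega] at this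
            exact this
        _ ≤ (∑ t ∈ Finset.range k, L^[n + t] r₀ a) + L^[n + k] r₀ a :=
            add_le_add (ih a) (hstep (n+k) a)
        _ = ∑ t ∈ Finset.range (k+1), L^[n + t] r₀ a := (Finset.sum_range_succ _ _).symm
  have hdistS : ∀ n m a, n ≤ m → d a (x_ n) (x_ m) ≤ S n a := by
    intro n m a hnm
    obtain ⟨k, rfl⟩ := Nat.exists_eq_add_of_le hnm
    exact le_trans (hdist n k a) (hQ_le_S n k a)
  have hCauchy : ∀ a, ∀ ε > (0:ℝ), ∃ N, ∀ m n, N ≤ m → N ≤ n → d a (x_ m) (x_ n) < ε := by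
    intro a ε hε
    obtain ⟨N, hN⟩ := Metric.tendsto_atTop.mp (hS_tendsto a) ε hε
    refine ⟨N, fun m n hm hn => ?_⟩
    have key : ∀ i j, N ≤ i → i ≤ j → d a (x_ i) (x_ j) < ε := by
      intro i j hi hij
      have h1 : d a (x_ i) (x_ j) ≤ S i a := hdistS i j a hij
      have h2 : S i a ≤ S N a := by
        obtain ⟨k, rfl⟩ := Nat.exists_eq_add_of_le hi
        exact hS_anti N k a
      have h3 := hN N le_rfl
      rw [Real.dist_eq, sub_zero, abs_of_nonneg (hS_nonneg N a)] at h3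
      linarith
    rcases le_total m n with h | h
    · exact key m n hm h
    · rw [hd_symm]; exact key n m hn h
  obtain ⟨xs, hxsF, hxs⟩ := hF_complete x_ hxF hCauchy
  have hnxs : ∀ n a, d a (x_ n) xs ≤ S n a := by
    intro n a
    have h1 : Tendsto (fun m => S n a + d a (x_ m) xs) atTop (𝓝 (S n a + 0)) :=
      tendsto_const_nhds.add (hxs a)
    rw [add_zero] at h1
    refine ge_of_tendsto h1 ?_
    filter_upwards [eventually_ge_atTop n] with m hm
    calc d a (x_ n) xs ≤ d a (x_ n) (x_ m) + d a (x_ m) xs := hd_tri a _ _ _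
      _ ≤ S n a + d a (x_ m) xs := by linarith [hdistS n m a hm]
  have hS0 : ∀ a, S 0 a = ∑' t, L^[t] r₀ a := by
    intro a
    simp only [hSdef]
    exact tsum_congr fun t => by rw [Nat.zero_add]
  have hx0 : x_ 0 = x₀ := by simp [hx_]
  have hV : ∀ a, d a x₀ xs ≤ S 0 a := by
    intro a
    have := hnxs 0 a
    rwa [hx0] at this
  -- xs is a fixed point
  have hfix : T xs = xs := by
    apply hd_sat
    intro a
    have hnn := hd_nonneg a (T xs) xs
    have hle : ∀ n, d a (T xs) xs ≤ S (n+1) a + d a (x_ (n+1)) xs := by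
      intro n
      have h2 := hL_contr xs hxsF _ (hxF n) a
      have hpC : (fun b => d b xs (x_ n)) ∈ C := hDF _ hxsF _ (hxF n)
      have hpS : ∀ b, d b xs (x_ n) ≤ S n b := fun b => by
        rw [hd_symm]; exact hnxs n b
      have h3 := hKey _ hpC n hpS a
      calc d a (T xs) xs ≤ d a (T xs) (x_ (n+1)) + d a (x_ (n+1)) xs := hd_tri a _ _ _
        _ ≤ S (n+1) a + d a (x_ (n+1)) xs := by
            rw [hxsucc n]
            exact add_le_add (le_trans h2 h3) le_rfl
    have hlim : Tendsto (fun n => S (n+1) a + d a (x_ (n+1)) xs) atTop (𝓝 (0 + 0)) := by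
      refine Tendsto.add ?_ ?_
      · exact (hS_tendsto a).comp (tendsto_add_atTop_nat 1)
      · exact (hxs a).comp (tendsto_add_atTop_nat 1)
    rw [add_zero] at hlim
    have h4 := ge_of_tendsto' hlim hle
    linarith
  -- attraction
  have hattr : ∀ y₀, y₀ ∈ F → (∀ a, d a x₀ y₀ ≤ S 0 a) →
      ∀ a, Tendsto (fun n => d a (T^[n] y₀) xs) atTop (𝓝 0) := by
    intro y₀ hy₀F hy₀V a
    have hyF : ∀ n, T^[n] y₀ ∈ F := by
      intro n; induction n with
      | zero => simpa using hy₀F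
      | succ n ih => rw [Function.iterate_succ_apply']; exact hT _ ih
    have hpS : ∀ n b, d b (x_ n) (T^[n] y₀) ≤ S n b := by
      intro n
      induction n with
      | zero => intro b; rw [hx0]; simpa using hy₀V b
      | succ n ih =>
        intro b
        have hpC : (fun c => d c (x_ n) (T^[n] y₀)) ∈ C := hDF _ (hxF n) _ (hyF n)
        have h2 := hKey _ hpC n ih b
        have h3 := hL_contr _ (hxF n) _ (hyF n) b
        rw [hxsucc n, Function.iterate_succ_apply']
        exact le_trans h3 h2
    refine squeeze_zero (g := fun n => S n a + d a (x_ n) xs)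
      (fun n => hd_nonneg a _ _) (fun n => ?_) ?_
    · calc d a (T^[n] y₀) xs ≤ d a (T^[n] y₀) (x_ n) + d a (x_ n) xs := hd_tri a _ _ _
        _ ≤ S n a + d a (x_ n) xs := by
            have := hpS n a
            rw [hd_symm a (T^[n] y₀) (x_ n)]
            linarith
    · have h := (hS_tendsto a).add (hxs a)
      simpa using h
  refine ⟨xs, ⟨⟨hxsF, fun a => ?_⟩, hfix⟩, ?_, ?_⟩
  · rw [← hS0 a]; exact hV a
  · rintro y ⟨hyF, hyV⟩ hfy
    apply hd_sat
    intro a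
    have h := hattr y hyF (fun a => by rw [hS0 a]; exact hyV a) a
    have hconst : (fun n => d a (T^[n] y) xs) = fun _ => d a y xs :=
      funext fun n => by rw [Function.iterate_fixed hfy n]
    rw [hconst] at h
    exact (tendsto_nhds_unique h tendsto_const_nhds).symm
  · rintro y₀ ⟨hy₀F, hy₀V⟩
    exact hattr y₀ hy₀F fun a => by rw [hS0 a]; exact hy₀V a
end

section
/- (Global uniqueness) Let (E, D) be Hausdorff and sequentially complete with a saturated family of pseudometrics, let T : F → F be an L-local contraction on the sequentially complete subset F ⊆ E, and let x₀ ∈ F satisfy conditions (I)–(VI). Suppose furthermore that for any x ∈ F one may choose r₀ ∈ C satisfying (VI) such that x ∈ V_F(x₀, R₀) with R₀ = Σ_t L^t r₀. Then T has a unique fixed point in all of F, and for every x ∈ F the sequence of iterates T^n x converges to this fixed point. -/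
open Filter Topology

set_option maxHeartbeats 1000000

/-- Theorem (global uniqueness): under (I)-(VI), if for every x in F one can choose r0 in C
satisfying (VI) with x in V_F(x0, R0), then T has a unique fixed point in all of F and the
iterates T^n x converge to it from any x in F. -/
theorem stmt3 {E A : Type*} (d : A → E → E → ℝ)
    (hd_nonneg : ∀ a x y, 0 ≤ d a x y)
    (hd_refl : ∀ a x, d a x x = 0)
    (hd_symm : ∀ a x y, d a x y = d a y x)
    (hd_tri : ∀ a x y z, d a x z ≤ d a x y + d a y z)
    (hd_sat : ∀ x y, (∀ a, d a x y = 0) → x = y)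
    (hE_complete : ∀ u : ℕ → E,
      (∀ a, ∀ ε > (0:ℝ), ∃ N, ∀ m n, N ≤ m → N ≤ n → d a (u m) (u n) < ε) →
      ∃ x : E, ∀ a, Tendsto (fun n => d a (u n) x) atTop (𝓝 0))
    (F : Set E)
    (hF_complete : ∀ u : ℕ → E, (∀ n, u n ∈ F) →
      (∀ a, ∀ ε > (0:ℝ), ∃ N, ∀ m n, N ≤ m → N ≤ n → d a (u m) (u n) < ε) →
      ∃ x ∈ F, ∀ a, Tendsto (fun n => d a (u n) x) atTop (𝓝 0))
    (T : E → E) (hT : ∀ x ∈ F, T x ∈ F)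
    (C : Set (A → ℝ)) (hC_nonneg : ∀ p ∈ C, ∀ a, 0 ≤ p a)
    -- `D(F) ⊆ C`
    (hDF : ∀ x ∈ F, ∀ y ∈ F, (fun a => d a x y) ∈ C)
    (L : (A → ℝ) → (A → ℝ)) (hL_into : ∀ p ∈ C, L p ∈ C)
    -- `T` is an `L`-local contraction on `F`
    (hL_contr : ∀ x ∈ F, ∀ y ∈ F, ∀ a, d a (T x) (T y) ≤ L (fun b => d b x y) a)
    -- (I)
    (hC_add : ∀ p ∈ C, ∀ q ∈ C, (fun a => p a + q a) ∈ C)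
    (hC_down : ∀ p : A → ℝ, ∀ q ∈ C, (∀ a, 0 ≤ p a) → (∀ a, p a ≤ q a) → p ∈ C)
    (hC_chain : ∀ u : ℕ → (A → ℝ), (∀ n, u n ∈ C) → (∀ n a, u n a ≤ u (n+1) a) →
      (∃ q ∈ C, ∀ n a, u n a ≤ q a) → (fun a => ⨆ n, u n a) ∈ C)
    -- (II)
    (hL0 : L (fun _ => 0) = (fun _ => 0))
    -- (III)
    (hL_mono : ∀ p ∈ C, ∀ q ∈ C, (∀ a, p a ≤ q a) → ∀ a, L p a ≤ L q a)
    -- (IV)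
    (hL_sub : ∀ p ∈ C, ∀ q ∈ C, ∀ a, L (fun b => p b + q b) a ≤ L p a + L q a)
    -- (V)
    (hL_sup : ∀ u : ℕ → (A → ℝ), (∀ n, u n ∈ C) → (∀ n a, u n a ≤ u (n+1) a) →
      (∃ q ∈ C, ∀ n a, u n a ≤ q a) →
      ∀ a, L (fun b => ⨆ n, u n b) a ≤ ⨆ n, L (u n) a)
    -- (VI), with the extra choice property: every `x ∈ F` lies in some `V_F(x₀, R₀)`
    (x₀ : E) (hx₀ : x₀ ∈ F)
    (hVI : ∀ x ∈ F, ∃ r₀ ∈ C, (∀ a, d a x₀ (T x₀) ≤ r₀ a) ∧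
      (∀ a, Summable (fun t => L^[t] r₀ a)) ∧
      (∀ a, d a x₀ x ≤ ∑' t, L^[t] r₀ a)) :
    ∃ x ∈ F, T x = x ∧ (∀ y ∈ F, T y = y → y = x) ∧
      (∀ y ∈ F, ∀ a, Tendsto (fun n => d a (T^[n] y) x) atTop (𝓝 0)) := by
  classical
  -- iterates of L stay in C
  have hLtC : ∀ r ∈ C, ∀ t, L^[t] r ∈ C := by
    intro r hr t
    induction t with
    | zero => simpa using hr
    | succ n ih => rw [Function.iterate_succ_apply']; exact hL_into _ ih
  -- segments of the series belong to C
  have hSgC : ∀ r ∈ C, ∀ m n, (fun b => ∑ t ∈ Finset.range n, L^[t + m] r b) ∈ C := by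
    intro r hr m n
    induction n with
    | zero =>
        simp only [Finset.range_zero, Finset.sum_empty]
        exact hC_down _ r hr (fun a => le_rfl) (fun a => hC_nonneg r hr a)
    | succ n ih =>
        simp only [Finset.sum_range_succ]
        exact hC_add _ ih _ (hLtC r hr (n + m))
  -- L of a segment is bounded by the shifted segment
  have hLSg : ∀ r ∈ C, ∀ m n a,
      L (fun b => ∑ t ∈ Finset.range n, L^[t + m] r b) a
        ≤ ∑ t ∈ Finset.range n, L^[t + (m+1)] r a := by
    intro r hr m n a
    induction n with
    | zero =>
        simp only [Finset.range_zero, Finset.sum_empty]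
        rw [hL0]
    | succ n ih =>
        simp only [Finset.sum_range_succ]
        refine le_trans ?_ (add_le_add ih le_rfl)
        have h1 := hL_sub _ (hSgC r hr m n) _ (hLtC r hr (n + m)) a
        refine le_trans (le_of_eq ?_) (le_trans h1 ?_)
        · rfl
        · have : L (L^[n + m] r) a = L^[n + (m+1)] r a := by
            rw [show n + (m+1) = (n + m) + 1 from rfl, Function.iterate_succ_apply']
          rw [this]
  have hsum_shift : ∀ (r : A → ℝ), (∀ a, Summable fun t => L^[t] r a) →
      ∀ m a, Summable fun t => L^[t + m] r a := by
    intro r h m a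
    exact (summable_nat_add_iff m).2 (h a)
  have htailnn : ∀ r ∈ C, ∀ m a, (0:ℝ) ≤ ∑' t, L^[t + m] r a := by
    intro r hr m a
    exact tsum_nonneg (fun t => hC_nonneg _ (hLtC r hr _) a)
  -- KEY: if p ∈ C is below the m-th tail, then L p is below the (m+1)-st tail
  have key : ∀ r ∈ C, (∀ a, Summable fun t => L^[t] r a) → ∀ p ∈ C, ∀ m,
      (∀ b, p b ≤ ∑' t, L^[t + m] r b) → ∀ a, L p a ≤ ∑' t, L^[t + (m+1)] r a := by
    intro r hr hsum p hp m hple a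
    have hpnn : ∀ b, 0 ≤ p b := hC_nonneg p hp
    set u : ℕ → A → ℝ := fun n b => min (p b) (∑ t ∈ Finset.range n, L^[t + m] r b) with hu
    have huC : ∀ n, u n ∈ C := by
      intro n
      refine hC_down _ p hp (fun b => le_min (hpnn b) ?_) (fun b => min_le_left _ _)
      exact Finset.sum_nonneg fun t _ => hC_nonneg _ (hLtC r hr (t + m)) b
    have humono : ∀ n b, u n b ≤ u (n+1) b := by
      intro n b
      refine min_le_min le_rfl ?_
      refine Finset.sum_le_sum_of_subset_of_nonneg (Finset.range_subset_range.2 (Nat.le_succ n)) ?_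
      intro t _ _
      exact hC_nonneg _ (hLtC r hr (t + m)) b
    have hsup : ∀ b, (⨆ n, u n b) = p b := by
      intro b
      have hmono : Monotone fun n => u n b := monotone_nat_of_le_succ fun n => humono n b
      have hbdd : BddAbove (Set.range fun n => u n b) := by
        refine ⟨p b, ?_⟩
        rintro _ ⟨n, rfl⟩
        exact min_le_left _ _
      have h1 : Tendsto (fun n => ∑ t ∈ Finset.range n, L^[t + m] r b) atTop
          (𝓝 (∑' t, L^[t + m] r b)) := (hsum_shift r hsum m b).hasSum.tendsto_sum_nat
      have h2 : Tendsto (fun n => u n b) atTop (𝓝 (min (p b) (∑' t, L^[t + m] r b))) :=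
        tendsto_const_nhds.min h1
      rw [min_eq_left (hple b)] at h2
      exact tendsto_nhds_unique (tendsto_atTop_ciSup hmono hbdd) h2
    have hLsup := hL_sup u huC humono ⟨p, hp, fun n b => min_le_left _ _⟩ a
    rw [show (fun b => ⨆ n, u n b) = p from funext hsup] at hLsup
    refine hLsup.trans (ciSup_le fun n => ?_)
    have h1 : L (u n) a ≤ L (fun b => ∑ t ∈ Finset.range n, L^[t + m] r b) a :=
      hL_mono _ (huC n) _ (hSgC r hr m n) (fun b => min_le_right _ _) a
    refine h1.trans ((hLSg r hr m n a).trans ?_)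
    exact Summable.sum_le_tsum (Finset.range n)
      (fun t _ => hC_nonneg _ (hLtC r hr (t + (m+1))) a) (hsum_shift r hsum (m+1) a)
  -- iterates stay in F
  have hitF : ∀ y ∈ F, ∀ n, T^[n] y ∈ F := by
    intro y hy n
    induction n with
    | zero => simpa using hy
    | succ n ih => rw [Function.iterate_succ_apply']; exact hT _ ih
  -- choose r₀ for x₀
  obtain ⟨r₀, hr₀C, hr₀d, hr₀sum, -⟩ := hVI x₀ hx₀
  -- consecutive iterates
  have hstep : ∀ n a, d a (T^[n] x₀) (T^[n+1] x₀) ≤ L^[n] r₀ a := by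
    intro n
    induction n with
    | zero => intro a; simpa using hr₀d a
    | succ n ih =>
        intro a
        rw [Function.iterate_succ_apply' T (n+1) x₀, Function.iterate_succ_apply' T n x₀]
        refine le_trans (hL_contr _ (hitF x₀ hx₀ n) _ (hT _ (hitF x₀ hx₀ n)) a) ?_
        rw [Function.iterate_succ_apply' L n r₀]
        refine hL_mono _ (hDF _ (hitF x₀ hx₀ n) _ (hT _ (hitF x₀ hx₀ n))) _ (hLtC r₀ hr₀C n)
          (fun b => ?_) a
        rw [← Function.iterate_succ_apply' T n x₀]
        exact ih b
  -- segment bound on distances between iterates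
  have hseg : ∀ m k a, d a (T^[m] x₀) (T^[m+k] x₀) ≤ ∑ t ∈ Finset.range k, L^[t + m] r₀ a := by
    intro m k
    induction k with
    | zero => intro a; simp [hd_refl]
    | succ k ih =>
        intro a
        rw [Finset.sum_range_succ]
        have h1 := hd_tri a (T^[m] x₀) (T^[m+k] x₀) (T^[m+(k+1)] x₀)
        have h2 : d a (T^[m+k] x₀) (T^[m+(k+1)] x₀) ≤ L^[k + m] r₀ a := by
          have := hstep (m+k) a
          rw [Nat.add_comm k m]
          exact this
        exact h1.trans (add_le_add (ih a) h2)
  have htail0 : ∀ a, Tendsto (fun m => ∑' t, L^[t + m] r₀ a) atTop (𝓝 0) := by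
    intro a
    exact tendsto_sum_nat_add (fun t => L^[t] r₀ a)
  have htail : ∀ m n a, m ≤ n → d a (T^[m] x₀) (T^[n] x₀) ≤ ∑' t, L^[t + m] r₀ a := by
    intro m n a h
    have h1 := hseg m (n - m) a
    rw [Nat.add_sub_cancel' h] at h1
    refine h1.trans (Summable.sum_le_tsum (Finset.range (n - m))
      (fun t _ => hC_nonneg _ (hLtC r₀ hr₀C (t + m)) a) (hsum_shift r₀ hr₀sum m a))
  -- Cauchy
  have hcauchy : ∀ a, ∀ ε > (0:ℝ), ∃ N, ∀ m n, N ≤ m → N ≤ n →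
      d a (T^[m] x₀) (T^[n] x₀) < ε := by
    intro a ε hε
    obtain ⟨N, hN⟩ := eventually_atTop.1 ((htail0 a).eventually_lt_const hε)
    refine ⟨N, fun m n hm hn => ?_⟩
    rcases le_total m n with h | h
    · exact lt_of_le_of_lt (htail m n a h) (hN m hm)
    · rw [hd_symm]
      exact lt_of_le_of_lt (htail n m a h) (hN n hn)
  obtain ⟨xs, hxsF, hxslim⟩ := hF_complete (fun n => T^[n] x₀) (fun n => hitF x₀ hx₀ n) hcauchy
  -- distance from iterates to the limit is bounded by the tail
  have hpm_le : ∀ m b, d b (T^[m] x₀) xs ≤ ∑' t, L^[t + m] r₀ b := by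
    intro m b
    have hb : Tendsto (fun n => d b (T^[n] x₀) xs) atTop (𝓝 0) := hxslim b
    have hlim2 : Tendsto (fun n => (∑' t, L^[t + m] r₀ b) + d b (T^[n] x₀) xs) atTop
        (𝓝 ((∑' t, L^[t + m] r₀ b) + 0)) := tendsto_const_nhds.add hb
    rw [add_zero] at hlim2
    refine ge_of_tendsto hlim2 ?_
    filter_upwards [eventually_ge_atTop m] with n hn
    calc d b (T^[m] x₀) xs ≤ d b (T^[m] x₀) (T^[n] x₀) + d b (T^[n] x₀) xs :=
          hd_tri b _ _ _
      _ ≤ (∑' t, L^[t + m] r₀ b) + d b (T^[n] x₀) xs :=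
          add_le_add (htail m n b hn) le_rfl
  -- xs is a fixed point
  have hfix : T xs = xs := by
    have h0 : ∀ a, d a xs (T xs) = 0 := by
      intro a
      have hseq : ∀ m, d a xs (T xs) ≤ d a (T^[m+1] x₀) xs + ∑' t, L^[t + (m+1)] r₀ a := by
        intro m
        have h1 := hd_tri a xs (T^[m+1] x₀) (T xs)
        have h2 : d a (T^[m+1] x₀) (T xs) ≤ L (fun b => d b (T^[m] x₀) xs) a := by
          rw [Function.iterate_succ_apply' T m x₀]
          exact hL_contr _ (hitF x₀ hx₀ m) _ hxsF a
        have h3 : L (fun b => d b (T^[m] x₀) xs) a ≤ ∑' t, L^[t + (m+1)] r₀ a :=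
          key r₀ hr₀C hr₀sum _ (hDF _ (hitF x₀ hx₀ m) _ hxsF) m (fun b => hpm_le m b) a
        calc d a xs (T xs) ≤ d a xs (T^[m+1] x₀) + d a (T^[m+1] x₀) (T xs) := h1
          _ ≤ d a (T^[m+1] x₀) xs + ∑' t, L^[t + (m+1)] r₀ a :=
              add_le_add (le_of_eq (hd_symm a xs (T^[m+1] x₀))) (h2.trans h3)
      have hlim : Tendsto (fun m => d a (T^[m+1] x₀) xs + ∑' t, L^[t + (m+1)] r₀ a) atTop
          (𝓝 (0 + 0)) := by
        refine Tendsto.add ?_ ?_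
        · exact (hxslim a).comp (tendsto_add_atTop_nat 1)
        · exact (htail0 a).comp (tendsto_add_atTop_nat 1)
      rw [add_zero] at hlim
      exact le_antisymm (ge_of_tendsto' hlim hseq) (hd_nonneg a xs (T xs))
    exact (hd_sat xs (T xs) h0).symm
  -- convergence from any starting point
  have hconv : ∀ y ∈ F, ∀ a, Tendsto (fun n => d a (T^[n] y) xs) atTop (𝓝 0) := by
    intro y hy a
    obtain ⟨r₁, hr₁C, -, hr₁sum, hr₁d⟩ := hVI y hy
    have hiter : ∀ n b, d b (T^[n] x₀) (T^[n] y) ≤ ∑' t, L^[t + n] r₁ b := by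
      intro n
      induction n with
      | zero => intro b; simpa using hr₁d b
      | succ n ih =>
          intro b
          rw [Function.iterate_succ_apply' T n x₀, Function.iterate_succ_apply' T n y]
          refine (hL_contr _ (hitF x₀ hx₀ n) _ (hitF y hy n) b).trans ?_
          exact key r₁ hr₁C hr₁sum _ (hDF _ (hitF x₀ hx₀ n) _ (hitF y hy n)) n ih b
    have hub : ∀ n, d a (T^[n] y) xs ≤ (∑' t, L^[t + n] r₁ a) + d a (T^[n] x₀) xs := by
      intro n
      calc d a (T^[n] y) xs ≤ d a (T^[n] y) (T^[n] x₀) + d a (T^[n] x₀) xs := hd_tri a _ _ _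
        _ ≤ _ := by
            refine add_le_add ?_ le_rfl
            rw [hd_symm]
            exact hiter n a
    have hlim : Tendsto (fun n => (∑' t, L^[t + n] r₁ a) + d a (T^[n] x₀) xs) atTop
        (𝓝 (0 + 0)) := (tendsto_sum_nat_add (fun t => L^[t] r₁ a)).add (hxslim a)
    rw [add_zero] at hlim
    exact squeeze_zero (fun n => hd_nonneg _ _ _) hub hlim
  refine ⟨xs, hxsF, hfix, ?_, fun y hy a => hconv y hy a⟩
  intro y hy hTy
  refine hd_sat y xs (fun a => ?_)
  have h := hconv y hy a
  have heq : (fun n => d a (T^[n] y) xs) = fun _ => d a y xs :=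
    funext fun n => by rw [Function.iterate_fixed hTy n]
  rw [heq] at h
  exact tendsto_nhds_unique tendsto_const_nhds h
end

section
/- Let L : C → ℝ₊^A satisfy conditions (I)–(V) of the local contraction framework and additionally L(αd) ≤ α L d for all d ∈ C and α ∈ [0,1]. Let T : F → F be an L-local contraction, x₀ ∈ F, and set d₀(a) = d_a(x₀, Tx₀). If there exist t₀ ∈ ℕ, s ∈ C and θ ∈ [0,1) with L^{t₀} d₀ ≤ s and Ls ≤ θ s, then Σ_{t=0}^∞ (L^t d₀)(a) < ∞ for all a ∈ A, i.e. condition (VI) holds with r₀ = d₀. -/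
open Filter Topology

/-- Proposition (sufficient condition for (VI)): if moreover `L(αd) ≤ αLd` for `α ∈ [0,1]`,
and there are `t₀`, `s ∈ C`, `θ ∈ [0,1)` with `L^[t₀] d₀ ≤ s` and `L s ≤ θ s`, where
`d₀ a = d a x₀ (T x₀)`, then `Σ_t (L^t d₀)(a) < ∞` for all `a`, i.e. (VI) holds with `r₀ = d₀`. -/
theorem stmt4 {E A : Type*} (d : A → E → E → ℝ)
    (hd_nonneg : ∀ a x y, 0 ≤ d a x y)
    (hd_refl : ∀ a x, d a x x = 0)
    (hd_symm : ∀ a x y, d a x y = d a y x)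
    (hd_tri : ∀ a x y z, d a x z ≤ d a x y + d a y z)
    (hd_sat : ∀ x y, (∀ a, d a x y = 0) → x = y)
    (hE_complete : ∀ u : ℕ → E,
      (∀ a, ∀ ε > (0:ℝ), ∃ N, ∀ m n, N ≤ m → N ≤ n → d a (u m) (u n) < ε) →
      ∃ x : E, ∀ a, Tendsto (fun n => d a (u n) x) atTop (𝓝 0))
    (F : Set E)
    (hF_complete : ∀ u : ℕ → E, (∀ n, u n ∈ F) →
      (∀ a, ∀ ε > (0:ℝ), ∃ N, ∀ m n, N ≤ m → N ≤ n → d a (u m) (u n) < ε) →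
      ∃ x ∈ F, ∀ a, Tendsto (fun n => d a (u n) x) atTop (𝓝 0))
    (T : E → E) (hT : ∀ x ∈ F, T x ∈ F)
    (C : Set (A → ℝ)) (hC_nonneg : ∀ p ∈ C, ∀ a, 0 ≤ p a)
    -- `D(F) ⊆ C`
    (hDF : ∀ x ∈ F, ∀ y ∈ F, (fun a => d a x y) ∈ C)
    (L : (A → ℝ) → (A → ℝ)) (hL_into : ∀ p ∈ C, L p ∈ C)
    -- `T` is an `L`-local contraction on `F`
    (hL_contr : ∀ x ∈ F, ∀ y ∈ F, ∀ a, d a (T x) (T y) ≤ L (fun b => d b x y) a)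
    -- (I)
    (hC_add : ∀ p ∈ C, ∀ q ∈ C, (fun a => p a + q a) ∈ C)
    (hC_down : ∀ p : A → ℝ, ∀ q ∈ C, (∀ a, 0 ≤ p a) → (∀ a, p a ≤ q a) → p ∈ C)
    (hC_chain : ∀ u : ℕ → (A → ℝ), (∀ n, u n ∈ C) → (∀ n a, u n a ≤ u (n+1) a) →
      (∃ q ∈ C, ∀ n a, u n a ≤ q a) → (fun a => ⨆ n, u n a) ∈ C)
    -- (II)
    (hL0 : L (fun _ => 0) = (fun _ => 0))
    -- (III)
    (hL_mono : ∀ p ∈ C, ∀ q ∈ C, (∀ a, p a ≤ q a) → ∀ a, L p a ≤ L q a)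
    -- (IV)
    (hL_sub : ∀ p ∈ C, ∀ q ∈ C, ∀ a, L (fun b => p b + q b) a ≤ L p a + L q a)
    -- (V)
    (hL_sup : ∀ u : ℕ → (A → ℝ), (∀ n, u n ∈ C) → (∀ n a, u n a ≤ u (n+1) a) →
      (∃ q ∈ C, ∀ n a, u n a ≤ q a) →
      ∀ a, L (fun b => ⨆ n, u n b) a ≤ ⨆ n, L (u n) a)
    -- positive subhomogeneity
    (hL_hom : ∀ p ∈ C, ∀ α : ℝ, 0 ≤ α → α ≤ 1 → ∀ a, L (fun b => α * p b) a ≤ α * L p a)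
    (x₀ : E) (hx₀ : x₀ ∈ F)
    (t₀ : ℕ) (s : A → ℝ) (hs : s ∈ C) (θ : ℝ) (hθ0 : 0 ≤ θ) (hθ1 : θ < 1)
    (hts : ∀ a, L^[t₀] (fun b => d b x₀ (T x₀)) a ≤ s a)
    (hLs : ∀ a, L s a ≤ θ * s a) :
    ∀ a, Summable (fun t => L^[t] (fun b => d b x₀ (T x₀)) a) := by
  set d₀ : A → ℝ := fun b => d b x₀ (T x₀) with hd₀
  have hd₀C : d₀ ∈ C := hDF x₀ hx₀ (T x₀) (hT x₀ hx₀)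
  have hiter : ∀ p ∈ C, ∀ n, L^[n] p ∈ C := by
    intro p hp n
    induction n with
    | zero => simpa using hp
    | succ n ih => rw [Function.iterate_succ_apply']; exact hL_into _ ih
  have hθk_mem : ∀ k : ℕ, (fun a => θ ^ k * s a) ∈ C := by
    intro k
    refine hC_down _ s hs
      (fun a => mul_nonneg (pow_nonneg hθ0 k) (hC_nonneg s hs a)) ?_
    intro a
    exact mul_le_of_le_one_left (hC_nonneg s hs a) (pow_le_one₀ hθ0 hθ1.le)
  have hLk : ∀ k, ∀ a, L^[k] s a ≤ θ ^ k * s a := by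
    intro k
    induction k with
    | zero => simp
    | succ k ih =>
      intro a
      rw [Function.iterate_succ_apply']
      calc L (L^[k] s) a ≤ L (fun a => θ ^ k * s a) a :=
            hL_mono _ (hiter s hs k) _ (hθk_mem k) ih a
        _ ≤ θ ^ k * L s a :=
            hL_hom s hs (θ ^ k) (pow_nonneg hθ0 k) (pow_le_one₀ hθ0 hθ1.le) a
        _ ≤ θ ^ k * (θ * s a) :=
            mul_le_mul_of_nonneg_left (hLs a) (pow_nonneg hθ0 k)
        _ = θ ^ (k + 1) * s a := by ring
  have hmain : ∀ k, ∀ a, L^[t₀ + k] d₀ a ≤ L^[k] s a := by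
    intro k
    induction k with
    | zero => simpa using hts
    | succ k ih =>
      intro a
      have h1 : t₀ + (k + 1) = (t₀ + k) + 1 := by ring
      rw [h1, Function.iterate_succ_apply', Function.iterate_succ_apply']
      exact hL_mono _ (hiter d₀ hd₀C (t₀ + k)) _ (hiter s hs k) ih a
  intro a
  have hnn : ∀ t, 0 ≤ L^[t] d₀ a := fun t => hC_nonneg _ (hiter d₀ hd₀C t) a
  rw [← summable_nat_add_iff t₀]
  refine Summable.of_nonneg_of_le (fun k => hnn _) (fun k => ?_)
    ((summable_geometric_of_lt_one hθ0 hθ1).mul_right (s a))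
  calc L^[k + t₀] d₀ a = L^[t₀ + k] d₀ a := by rw [Nat.add_comm]
    _ ≤ L^[k] s a := hmain k a
    _ ≤ θ ^ k * s a := hLk k a
end

section
/- Under assumptions (B1)–(B5), the Bellman operator T defined by (Tf)(x,z) = max_{y ∈ Γ(x,z)} { U(x,y,z) + β ∫_Z f(y,z') Q_z(dz') } on a subset F of ℒ¹(Z; C(X)) such that p[Γ] ∈ ℒ¹(Z; C(X)) for all p ∈ D(F), is an L-local contraction on F with contraction operator parameter (Lp)(K,z) = β ∫_Z max_{x∈K} p(Γ(x,z'), z') Q_z(dz'); that is, p_{K,z}(Tf − Tg) ≤ (L p^{f−g})(K, z) for all f, g ∈ F, compact K ⊆ X and z ∈ Z, where p^{f−g}(K,z) = p_{K,z}(f−g). -/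
open MeasureTheory Filter Topology

noncomputable section

abbrev Euc (n : ℕ) : Type := EuclideanSpace ℝ (Fin n)

def Cara {X : Type*} [TopologicalSpace X] {Z : Type*} [MeasurableSpace Z]
    (f : X → Z → ℝ) : Prop :=
  (∀ x, Measurable (f x)) ∧ (∀ z, Continuous fun x => f x z)

/-- Upper hemicontinuity of a correspondence. -/
def UHC {α β : Type*} [TopologicalSpace α] [TopologicalSpace β] (G : α → Set β) : Prop :=
  ∀ a, ∀ V : Set β, IsOpen V → G a ⊆ V → ∀ᶠ a' in nhds a, G a' ⊆ V

/-- Lower hemicontinuity of a correspondence. -/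
def LHC {α β : Type*} [TopologicalSpace α] [TopologicalSpace β] (G : α → Set β) : Prop :=
  ∀ a, ∀ V : Set β, IsOpen V → (G a ∩ V).Nonempty → ∀ᶠ a' in nhds a, (G a' ∩ V).Nonempty

def MemL1C {l k : ℕ} (X : Set (Euc l)) (Z : Set (Euc k)) (Q : Z → Measure Z)
    (f : X → Z → ℝ) : Prop :=
  Cara f ∧ ∀ K : Set X, IsCompact K → ∀ z : Z,
    Integrable (fun z' => ⨆ x : K, |f x z'|) (Q z)

def pKz {l k : ℕ} {X : Set (Euc l)} {Z : Set (Euc k)} (Q : Z → Measure Z)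
    (K : Set X) (z : Z) (f : X → Z → ℝ) : ℝ :=
  ∫ z', (⨆ x : K, |f x z'|) ∂(Q z)

/-! ### Auxiliary lemmas -/

/-- Supremum of a continuous function over a compact separable space equals the
supremum over a dense sequence. -/
lemma sup_eq_sup_denseSeq {Y : Type*} [TopologicalSpace Y]
    [TopologicalSpace.SeparableSpace Y] [Nonempty Y] [CompactSpace Y]
    (ψ : Y → ℝ) (hψ : Continuous ψ) :
    (⨆ y, ψ y) = ⨆ n, ψ (TopologicalSpace.denseSeq Y n) := by
  set u := TopologicalSpace.denseSeq Y
  have hb : BddAbove (Set.range ψ) := (isCompact_range hψ).bddAbove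
  have hb2 : BddAbove (Set.range fun n => ψ (u n)) :=
    hb.mono (by rintro - ⟨n, rfl⟩; exact Set.mem_range_self _)
  refine le_antisymm (ciSup_le fun y => ?_) (ciSup_le fun n => le_ciSup hb (u n))
  have hy : y ∈ closure (Set.range u) := by
    rw [(TopologicalSpace.denseRange_denseSeq Y).closure_range]; trivial
  have h1 : ψ y ∈ closure (ψ '' Set.range u) :=
    (image_closure_subset_closure_image hψ) ⟨y, hy, rfl⟩
  have h2 : ψ '' Set.range u ⊆ Set.Iic (⨆ n, ψ (u n)) := by
    rintro - ⟨-, ⟨n, rfl⟩, rfl⟩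
    exact le_ciSup hb2 n
  exact (isClosed_Iic.closure_subset_iff.2 h2) h1

/-- Measurability of the compact supremum of a Carathéodory function. -/
lemma measurable_sup_compact {l k : ℕ} {X : Set (Euc l)} {Z : Set (Euc k)}
    (s : Set X) (hs : IsCompact s) (hne : s.Nonempty) (φ : X → Z → ℝ)
    (hm : ∀ x, Measurable (φ x)) (hc : ∀ z, Continuous fun x => φ x z) :
    Measurable fun z => ⨆ y : s, |φ y z| := by
  haveI : CompactSpace s := isCompact_iff_compactSpace.1 hs
  haveI : Nonempty s := hne.to_subtype
  have key : ∀ z : Z, (⨆ y : s, |φ y z|) = ⨆ n, |φ (TopologicalSpace.denseSeq s n) z| :=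
    fun z => sup_eq_sup_denseSeq (fun y : s => |φ y z|)
      (((hc z).comp continuous_subtype_val).abs)
  simp_rw [key]
  exact Measurable.iSup fun n => (hm _).abs

lemma pKz_nonneg {l k : ℕ} {X : Set (Euc l)} {Z : Set (Euc k)} (Q : Z → Measure Z)
    (K : Set X) (z : Z) (f : X → Z → ℝ) : 0 ≤ pKz Q K z f :=
  integral_nonneg fun _ => Real.iSup_nonneg fun _ => abs_nonneg _

lemma integrable_slice {l k : ℕ} {X : Set (Euc l)} {Z : Set (Euc k)} {Q : Z → Measure Z}
    {f : X → Z → ℝ} (hf : MemL1C X Z Q f) (y : X) (z : Z) :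
    Integrable (fun w => f y w) (Q z) := by
  have h := hf.2 {y} isCompact_singleton z
  have he : (fun w => ⨆ x : ({y} : Set X), |f x w|) = fun w => |f y w| := by
    funext w
    haveI : Unique ({y} : Set X) := Set.uniqueSingleton y
    rw [ciSup_unique]
    have hd : ((default : ({y} : Set X)) : ↑X) = y := (default : ({y} : Set X)).2
    rw [hd]
  rw [he] at h
  exact h.mono' ((hf.1.1 y).aestronglyMeasurable)
    (Eventually.of_forall fun w => by rw [Real.norm_eq_abs])

lemma bdd_range_compact {l : ℕ} {X : Set (Euc l)} (s : Set X) (hs : IsCompact s)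
    (h : X → ℝ) (hc : Continuous h) : BddAbove (Set.range fun y : s => h y) := by
  haveI : CompactSpace s := isCompact_iff_compactSpace.1 hs
  exact (isCompact_range (hc.comp continuous_subtype_val)).bddAbove

/-- The Bellman operator
`(Tf)(x,z) = max_{y∈Γ(x,z)} {U(x,y,z) + β ∫_Z f(y,z') Q_z(dz')}` is an `L`-local
contraction: `p_{K,z}(Tf − Tg) ≤ (L p^{f−g})(K,z)` where
`(Lp)(K,z) = β ∫_Z max_{x∈K} p(Γ(x,z'),z') Q_z(dz')`. -/
theorem stmt12 {l k : ℕ} (X : Set (Euc l)) (Z : Set (Euc k))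
    (hX : MeasurableSet X) (hZ : MeasurableSet Z)
    (β : ℝ) (hβ0 : 0 < β) (hβ1 : β < 1)
    (Q : Z → Measure Z) (hQ : ∀ z, IsProbabilityMeasure (Q z))
    (hQmeas : ∀ B : Set Z, MeasurableSet B → Measurable fun z => (Q z B).toReal)
    (Γ : X × Z → Set X)
    (hΓne : ∀ p, (Γ p).Nonempty) (hΓcpt : ∀ p, IsCompact (Γ p))
    (hΓu : UHC Γ) (hΓl : LHC Γ)
    (U : X → X → Z → ℝ)
    (hUmeas : ∀ x y, Measurable (U x y))
    (hUcont : ∀ z : Z, Continuous fun p : X × X => U p.1 p.2 z)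
    (f g : X → Z → ℝ) (hf : MemL1C X Z Q f) (hg : MemL1C X Z Q g)
    (hfΓ : MemL1C X Z Q (fun x z => pKz Q (Γ (x, z)) z (fun a b => f a b - g a b))) :
    ∀ K : Set X, IsCompact K → ∀ z : Z,
      pKz Q K z (fun x z' =>
          (⨆ y : Γ (x, z'), (U x y z' + β * ∫ w, f y w ∂(Q z'))) -
          (⨆ y : Γ (x, z'), (U x y z' + β * ∫ w, g y w ∂(Q z')))) ≤
        β * ∫ z', (⨆ x : K, pKz Q (Γ ((x : X), z')) z' (fun a b => f a b - g a b)) ∂(Q z) := by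
  intro K hK z
  have hφm : ∀ x : X, Measurable fun w => f x w - g x w := fun x =>
    (hf.1.1 x).sub (hg.1.1 x)
  have hφc : ∀ w : Z, Continuous fun x : X => f x w - g x w := fun w =>
    (hf.1.2 w).sub (hg.1.2 w)
  -- integrability of the inner supremum of |f-g|
  have hSint : ∀ p : X × Z, Integrable (fun w => ⨆ y : Γ p, |f y w - g y w|) (Q p.2) := by
    intro p
    have hmeas := measurable_sup_compact (Γ p) (hΓcpt p) (hΓne p) _ hφm hφc
    haveI : Nonempty (Γ p) := (hΓne p).to_subtype
    refine Integrable.mono'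
      ((hf.2 (Γ p) (hΓcpt p) p.2).add (hg.2 (Γ p) (hΓcpt p) p.2))
      hmeas.aestronglyMeasurable (Eventually.of_forall fun w => ?_)
    rw [Real.norm_eq_abs, abs_of_nonneg (Real.iSup_nonneg fun _ => abs_nonneg _)]
    refine ciSup_le fun y => ?_
    have h1 : |f y w| ≤ ⨆ x : Γ p, |f x w| :=
      le_ciSup (bdd_range_compact (Γ p) (hΓcpt p) _ ((hf.1.2 w).abs)) y
    have h2 : |g y w| ≤ ⨆ x : Γ p, |g x w| :=
      le_ciSup (bdd_range_compact (Γ p) (hΓcpt p) _ ((hg.1.2 w).abs)) y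
    calc |f y w - g y w| ≤ |f y w| + |g y w| := abs_sub _ _
      _ ≤ _ := add_le_add h1 h2
  -- the core pointwise contraction estimate
  have core : ∀ (x : X) (z' : Z),
      |(⨆ y : Γ (x, z'), (U x y z' + β * ∫ w, f y w ∂(Q z'))) -
        (⨆ y : Γ (x, z'), (U x y z' + β * ∫ w, g y w ∂(Q z')))| ≤
      β * pKz Q (Γ (x, z')) z' (fun a b => f a b - g a b) := by
    intro x z'
    haveI : Nonempty (Γ (x, z')) := (hΓne _).to_subtype
    -- bound on the "c" term
    have hc : ∀ y : Γ (x, z'),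
        β * |(∫ w, f y w ∂(Q z')) - ∫ w, g y w ∂(Q z')| ≤
          β * pKz Q (Γ (x, z')) z' (fun a b => f a b - g a b) := by
      intro y
      have hfy := integrable_slice hf y z'
      have hgy := integrable_slice hg y z'
      refine mul_le_mul_of_nonneg_left ?_ hβ0.le
      rw [← integral_sub hfy hgy]
      calc |∫ w, (f y w - g y w) ∂(Q z')| ≤ ∫ w, |f y w - g y w| ∂(Q z') := by
            simpa [Real.norm_eq_abs] using
              norm_integral_le_integral_norm (μ := Q z') (fun w => f y w - g y w)
        _ ≤ ∫ w, (⨆ y' : Γ (x, z'), |f y' w - g y' w|) ∂(Q z') := by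
            refine integral_mono ((hfy.sub hgy).abs) (hSint (x, z')) fun w => ?_
            exact le_ciSup (bdd_range_compact (Γ (x, z')) (hΓcpt _) _ ((hφc w).abs)) y
        _ = pKz Q (Γ (x, z')) z' (fun a b => f a b - g a b) := rfl
    -- boundedness of the argmax problem
    have hbound : ∀ h : X → Z → ℝ, MemL1C X Z Q h →
        BddAbove (Set.range fun y : Γ (x, z') => U x y z' + β * ∫ w, h y w ∂(Q z')) := by
      intro h hh
      obtain ⟨CU, hCU⟩ := bdd_range_compact (Γ (x, z')) (hΓcpt _) (fun y => U x y z')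
        ((hUcont z').comp (continuous_const.prodMk continuous_id))
      refine ⟨CU + β * ∫ w, (⨆ x' : Γ (x, z'), |h x' w|) ∂(Q z'), ?_⟩
      rintro - ⟨y, rfl⟩
      have hy := integrable_slice hh y z'
      have hle : (∫ w, h y w ∂(Q z')) ≤ ∫ w, (⨆ x' : Γ (x, z'), |h x' w|) ∂(Q z') := by
        refine integral_mono hy (hh.2 (Γ (x, z')) (hΓcpt _) z') fun w => ?_
        exact (le_abs_self _).trans
          (le_ciSup (bdd_range_compact (Γ (x, z')) (hΓcpt _) _ ((hh.1.2 w).abs)) y)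
      have hU : U x y z' ≤ CU := hCU (Set.mem_range_self y)
      exact add_le_add hU (mul_le_mul_of_nonneg_left hle hβ0.le)
    have key : ∀ h₁ h₂ : X → Z → ℝ, MemL1C X Z Q h₁ → MemL1C X Z Q h₂ →
        (∀ y : Γ (x, z'),
          β * |(∫ w, h₁ y w ∂(Q z')) - ∫ w, h₂ y w ∂(Q z')| ≤
            β * pKz Q (Γ (x, z')) z' (fun a b => f a b - g a b)) →
        (⨆ y : Γ (x, z'), (U x y z' + β * ∫ w, h₁ y w ∂(Q z'))) ≤
          (⨆ y : Γ (x, z'), (U x y z' + β * ∫ w, h₂ y w ∂(Q z'))) +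
            β * pKz Q (Γ (x, z')) z' (fun a b => f a b - g a b) := by
      intro h₁ h₂ hh₁ hh₂ hcc
      refine ciSup_le fun y => ?_
      have h1 : U x y z' + β * ∫ w, h₂ y w ∂(Q z') ≤
          ⨆ y' : Γ (x, z'), (U x y' z' + β * ∫ w, h₂ y' w ∂(Q z')) :=
        le_ciSup (hbound h₂ hh₂) y
      have h2 := hcc y
      have h3 : β * ∫ w, h₁ y w ∂(Q z') ≤ β * ∫ w, h₂ y w ∂(Q z') +
          β * |(∫ w, h₁ y w ∂(Q z')) - ∫ w, h₂ y w ∂(Q z')| := by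
        have := le_abs_self ((∫ w, h₁ y w ∂(Q z')) - ∫ w, h₂ y w ∂(Q z'))
        nlinarith [hβ0.le]
      linarith
    have k1 := key f g hf hg hc
    have k2 := key g f hg hf (fun y => by rw [abs_sub_comm]; exact hc y)
    rw [abs_sub_le_iff]
    constructor <;> linarith
  -- the outer estimate
  have hB_int : Integrable
      (fun z' => ⨆ x : K, pKz Q (Γ ((x : X), z')) z' (fun a b => f a b - g a b)) (Q z) := by
    have h := hfΓ.2 K hK z
    have he : (fun z' => ⨆ x : K, |pKz Q (Γ ((x : X), z')) z' (fun a b => f a b - g a b)|) =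
        fun z' => ⨆ x : K, pKz Q (Γ ((x : X), z')) z' (fun a b => f a b - g a b) := by
      funext z'
      congr 1
      funext x
      exact abs_of_nonneg (pKz_nonneg _ _ _ _)
    rwa [he] at h
  show (∫ z', (⨆ x : K, |_|) ∂(Q z)) ≤ _
  rw [← integral_const_mul]
  refine integral_mono_of_nonneg
    (Eventually.of_forall fun z' => Real.iSup_nonneg fun _ => abs_nonneg _)
    (hB_int.const_mul β) (Eventually.of_forall fun z' => ?_)
  have hBnn : 0 ≤ β * ⨆ x : K, pKz Q (Γ ((x : X), z')) z' (fun a b => f a b - g a b) :=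
    mul_nonneg hβ0.le (Real.iSup_nonneg fun _ => pKz_nonneg _ _ _ _)
  refine Real.iSup_le (fun x => ?_) hBnn
  refine (core x z').trans (mul_le_mul_of_nonneg_left ?_ hβ0.le)
  exact le_ciSup (bdd_range_compact K hK
    (fun x' => pKz Q (Γ (x', z')) z' (fun a b => f a b - g a b)) (hfΓ.1.2 z')) x
end
end

section
/- Under assumptions (B1)–(B6), if f ∈ V(0, R₀) = {g ∈ ℒ¹(Z;C(X)) : p_{K,z}(g) ≤ R₀(K,z) for all compact K, all z}, then Tf ∈ ℒ¹(Z; C(X)) and moreover Tf ∈ V(0, R₀); in particular, (Tf)(x,z) = max_{y∈Γ(x,z)}{U(x,y,z) + β ∫_Z f(y,z')Q_z(dz')} is a Carathéodory function and p_{K,z}(Tf) ≤ R₀(K,z). -/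
open MeasureTheory Filter Topology

noncomputable section

section Helpers

lemma bdd_range_compact_s14 {A : Type*} [TopologicalSpace A] {C : Set A} (hC : IsCompact C)
    {g : A → ℝ} (hg : Continuous g) : BddAbove (Set.range fun y : C => g y) := by
  rw [← Set.image_eq_range]
  exact (hC.image hg).bddAbove

lemma iSup_singleton' {A : Type*} (a : A) (g : A → ℝ) :
    (⨆ x : ({a} : Set A), g x) = g a := by
  haveI : Unique ({a} : Set A) := Set.uniqueSingleton a
  rw [ciSup_unique]
  congr
  exact (Subsingleton.elim _ _ : (default : ({a}:Set A)) = ⟨a, rfl⟩) ▸ rfl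

lemma cont_param_integral {A : Type*} [MetricSpace A] {Z : Type*} [MeasurableSpace Z]
    (μ : Measure Z) (f : A → Z → ℝ)
    (hmeas : ∀ y, Measurable (f y)) (hcont : ∀ w, Continuous fun y => f y w)
    (hdom : ∀ C : Set A, IsCompact C → Integrable (fun w => ⨆ x : C, |f x w|) μ) :
    Continuous fun y => ∫ w, f y w ∂μ := by
  rw [continuous_iff_seqContinuous]
  intro u y₀ hu
  have hC : IsCompact (insert y₀ (Set.range u)) := hu.isCompact_insert_range
  have : Tendsto (fun n => ∫ w, f (u n) w ∂μ) atTop (𝓝 (∫ w, f y₀ w ∂μ)) := by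
    apply tendsto_integral_of_dominated_convergence
      (bound := fun w => ⨆ x : (insert y₀ (Set.range u) : Set A), |f x w|)
    · exact fun n => (hmeas (u n)).aestronglyMeasurable
    · exact hdom _ hC
    · intro n
      refine Eventually.of_forall fun w => ?_
      rw [Real.norm_eq_abs]
      exact le_ciSup (bdd_range_compact_s14 hC (continuous_abs.comp (hcont w)))
        (⟨u n, Set.mem_insert_of_mem _ (Set.mem_range_self n)⟩ :
          (insert y₀ (Set.range u) : Set A))
    · exact Eventually.of_forall fun w => ((hcont w).tendsto y₀).comp hu
  exact this

lemma berge_cont {A B : Type*} [TopologicalSpace A] [TopologicalSpace B]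
    (G : A → Set B) (hne : ∀ a, (G a).Nonempty) (hcpt : ∀ a, IsCompact (G a))
    (huhc : ∀ a (V : Set B), IsOpen V → G a ⊆ V → ∀ᶠ a' in 𝓝 a, G a' ⊆ V)
    (hlhc : ∀ a (V : Set B), IsOpen V → (G a ∩ V).Nonempty → ∀ᶠ a' in 𝓝 a, (G a' ∩ V).Nonempty)
    (g : A → B → ℝ) (hg : Continuous fun p : A × B => g p.1 p.2) :
    Continuous fun a => ⨆ y : G a, g a y := by
  set q : A → ℝ := fun a => ⨆ y : G a, g a y with hq
  rw [continuous_iff_continuousAt]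
  intro a₀
  have bddq : ∀ a, BddAbove (Set.range fun y : G a => g a y) := fun a =>
    bdd_range_compact_s14 (hcpt a) (hg.comp (continuous_const.prodMk continuous_id))
  rw [ContinuousAt, Metric.tendsto_nhds]
  intro ε hε
  haveI : ∀ a, Nonempty (G a) := fun a => (hne a).to_subtype
  have husc : ∀ᶠ a in 𝓝 a₀, q a ≤ q a₀ + ε / 2 := by
    have hopen : IsOpen {p : A × B | g p.1 p.2 < q a₀ + ε / 2} := isOpen_lt hg continuous_const
    have hsub : ({a₀} : Set A) ×ˢ G a₀ ⊆ {p : A × B | g p.1 p.2 < q a₀ + ε / 2} := by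
      rintro ⟨a, y⟩ ⟨ha, hy⟩
      simp only [Set.mem_singleton_iff] at ha
      subst ha
      have : g a y ≤ q a := le_ciSup (bddq a) (⟨y, hy⟩ : G a)
      simp only [Set.mem_setOf_eq]
      exact lt_of_le_of_lt this (by linarith)
    obtain ⟨v, w, hv, hw, hsv, htw, hvw⟩ :=
      generalized_tube_lemma isCompact_singleton (hcpt a₀) hopen hsub
    have e1 : ∀ᶠ a in 𝓝 a₀, G a ⊆ w := huhc a₀ w hw htw
    have e2 : ∀ᶠ a in 𝓝 a₀, a ∈ v := hv.mem_nhds (hsv rfl)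
    filter_upwards [e1, e2] with a h1 h2
    refine ciSup_le fun y => ?_
    exact le_of_lt (hvw (Set.mk_mem_prod h2 (h1 y.2)))
  have hlsc : ∀ᶠ a in 𝓝 a₀, q a₀ - ε / 2 ≤ q a := by
    obtain ⟨y₀, hy₀⟩ : ∃ y : G a₀, q a₀ - ε / 2 < g a₀ y :=
      exists_lt_of_lt_ciSup (by linarith : q a₀ - ε / 2 < q a₀)
    have hopen : IsOpen {p : A × B | q a₀ - ε / 2 < g p.1 p.2} := isOpen_lt continuous_const hg
    have hmem : ((a₀ : A), (y₀ : B)) ∈ {p : A × B | q a₀ - ε / 2 < g p.1 p.2} := hy₀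
    obtain ⟨s, hs, t, ht, hst⟩ := mem_nhds_prod_iff.1 (hopen.mem_nhds hmem)
    have hy₀t : (y₀ : B) ∈ interior t := mem_interior_iff_mem_nhds.2 ht
    have e3 : ∀ᶠ a in 𝓝 a₀, (G a ∩ interior t).Nonempty :=
      hlhc a₀ (interior t) isOpen_interior ⟨y₀, y₀.2, hy₀t⟩
    have e4 : ∀ᶠ a in 𝓝 a₀, a ∈ s := hs
    filter_upwards [e3, e4] with a h3 h4
    obtain ⟨y, hyG, hyt⟩ := h3
    have : q a₀ - ε / 2 < g a y := hst (Set.mk_mem_prod h4 (interior_subset hyt))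
    exact le_trans (le_of_lt this) (le_ciSup (bddq a) (⟨y, hyG⟩ : G a))
  filter_upwards [husc, hlsc] with a h1 h2
  rw [Real.dist_eq, abs_sub_lt_iff]
  constructor <;> linarith

lemma meas_ciSup_corr {A Z : Type*} [MetricSpace A] [SecondCountableTopology A]
    [TopologicalSpace Z] [MeasurableSpace Z] [OpensMeasurableSpace Z]
    (G : Z → Set A) (hne : ∀ z, (G z).Nonempty) (hcpt : ∀ z, IsCompact (G z))
    (hlhc : ∀ z (V : Set A), IsOpen V → (G z ∩ V).Nonempty →
      ∀ᶠ z' in 𝓝 z, (G z' ∩ V).Nonempty)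
    (h : A → Z → ℝ) (hmeas : ∀ y, Measurable (h y)) (hcont : ∀ z, Continuous fun y => h y z) :
    Measurable fun z => ⨆ y : G z, h y z := by
  classical
  rcases isEmpty_or_nonempty Z with hZ | hZ
  · exact measurable_of_empty _
  haveI : Nonempty A := ⟨(hne (Classical.arbitrary Z)).some⟩
  obtain ⟨D, hD⟩ := TopologicalSpace.exists_dense_seq A
  set S : ℕ → ℕ → Set Z := fun n i =>
    {z | (G z ∩ Metric.ball (D i) (1 / (n + 1))).Nonempty} with hS
  have hSopen : ∀ n i, IsOpen (S n i) := by
    intro n i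
    rw [isOpen_iff_mem_nhds]
    intro z hz
    exact hlhc z _ Metric.isOpen_ball hz
  set H : ℕ → ℕ → Z → EReal := fun n i z =>
    if z ∈ S n i then ((h (D i) z : ℝ) : EReal) else ⊥ with hH
  have Hmeas : ∀ n i, Measurable (H n i) := fun n i =>
    Measurable.ite (hSopen n i).measurableSet
      (measurable_coe_real_ereal.comp (hmeas (D i))) measurable_const
  set M : Z → EReal := fun z => ⨅ n, ⨆ i, H n i z with hM
  have Mmeas : Measurable M :=
    Measurable.iInf fun n => Measurable.iSup fun i => Hmeas n i
  have key : ∀ z, M z = (((⨆ y : G z, h y z : ℝ)) : EReal) := by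
    intro z
    haveI : Nonempty (G z) := (hne z).to_subtype
    set q : ℝ := ⨆ y : G z, h y z with hqdef
    have bddq : BddAbove (Set.range fun y : G z => h y z) :=
      bdd_range_compact_s14 (hcpt z) (hcont z)
    apply le_antisymm
    · by_contra hcon
      push_neg at hcon
      obtain ⟨r, hr1, hr2⟩ := EReal.exists_rat_btwn_of_lt hcon
      have hchoice : ∀ n : ℕ, ∃ i, z ∈ S n i ∧ (r : ℝ) < h (D i) z := by
        intro n
        have : ((r : ℝ) : EReal) < ⨆ i, H n i z :=
          lt_of_lt_of_le hr2 (iInf_le _ n)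
        obtain ⟨i, hi⟩ := lt_iSup_iff.1 this
        refine ⟨i, ?_, ?_⟩
        · by_contra hzi
          rw [hH] at hi
          simp only [hzi, if_false] at hi
          exact absurd hi (by simp)
        · have hz : z ∈ S n i := by
            by_contra hzi
            rw [hH] at hi
            simp only [hzi, if_false] at hi
            exact absurd hi (by simp)
          rw [hH] at hi
          simp only [hz, if_true] at hi
          exact_mod_cast hi
      choose cs hcsS hcsval using hchoice
      have hwit : ∀ n : ℕ, ∃ y ∈ G z, dist y (D (cs n)) < 1 / (n + 1) := by
        intro n
        obtain ⟨y, hyG, hyball⟩ := hcsS n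
        exact ⟨y, hyG, by simpa [Metric.mem_ball] using hyball⟩
      choose ys hysG hysd using hwit
      obtain ⟨yy, hyyG, φ, hφ, hconv⟩ := (hcpt z).tendsto_subseq hysG
      have hdφ : Tendsto (fun n => D (cs (φ n))) atTop (𝓝 yy) := by
        rw [tendsto_iff_dist_tendsto_zero]
        apply squeeze_zero (fun n => dist_nonneg)
          (g := fun n => 1 / (n + 1) + dist (ys (φ n)) yy)
        · intro n
          calc dist (D (cs (φ n))) yy ≤ dist (D (cs (φ n))) (ys (φ n)) + dist (ys (φ n)) yy :=
                dist_triangle _ _ _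
            _ ≤ 1 / (n + 1) + dist (ys (φ n)) yy := by
                have h1 : dist (D (cs (φ n))) (ys (φ n)) < 1 / (φ n + 1) := by
                  rw [dist_comm]; exact hysd (φ n)
                have h2 : (1 : ℝ) / (φ n + 1) ≤ 1 / (n + 1) := by
                  apply one_div_le_one_div_of_le
                  · positivity
                  · have hnn : n ≤ φ n := hφ.le_apply
                    have : (n : ℝ) ≤ (φ n : ℝ) := by exact_mod_cast hnn
                    linarith
                linarith
        · have l1 : Tendsto (fun n : ℕ => 1 / ((n : ℝ) + 1)) atTop (𝓝 0) :=
            tendsto_one_div_add_atTop_nhds_zero_nat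
          have l2 : Tendsto (fun n => dist (ys (φ n)) yy) atTop (𝓝 0) :=
            (tendsto_iff_dist_tendsto_zero).1 hconv
          simpa using l1.add l2
      have hlim : Tendsto (fun n => h (D (cs (φ n))) z) atTop (𝓝 (h yy z)) :=
        ((hcont z).tendsto yy).comp hdφ
      have hge : (r : ℝ) ≤ h yy z :=
        ge_of_tendsto' hlim fun n => (hcsval (φ n)).le
      have hle : h yy z ≤ q := le_ciSup bddq (⟨yy, hyyG⟩ : G z)
      have : q < (r : ℝ) := by exact_mod_cast hr1
      linarith
    · rw [hM]
      refine le_iInf fun n => ?_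
      by_contra hcon
      push_neg at hcon
      obtain ⟨r, hr1, hr2⟩ := EReal.exists_rat_btwn_of_lt hcon
      have hrq : (r : ℝ) < q := by exact_mod_cast hr2
      obtain ⟨y, hy⟩ := exists_lt_of_lt_ciSup hrq
      have hopen : IsOpen {a : A | (r : ℝ) < h a z} := isOpen_lt continuous_const (hcont z)
      obtain ⟨δ, hδ, hball⟩ := Metric.isOpen_iff.1 hopen (y : A) hy
      have hpos : 0 < min δ (1 / (n + 1)) := lt_min hδ (by positivity)
      obtain ⟨i, hi⟩ := Metric.denseRange_iff.1 hD (y : A) _ hpos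
      have hzS : z ∈ S n i := by
        refine ⟨(y : A), y.2, ?_⟩
        rw [Metric.mem_ball]
        calc dist (y : A) (D i) = dist (y : A) (D i) := rfl
          _ < min δ (1 / (n + 1)) := hi
          _ ≤ 1 / (n + 1) := min_le_right _ _
      have hDi : (r : ℝ) < h (D i) z := by
        apply hball
        rw [Metric.mem_ball, dist_comm]
        exact lt_of_lt_of_le hi (min_le_left _ _)
      have hlt : ((r : ℝ) : EReal) < H n i z := by
        rw [hH]; simp only [hzS, if_true]; exact_mod_cast hDi
      have h2 : H n i z ≤ ⨆ j, H n j z := le_iSup (fun j => H n j z) i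
      have h3 : ((r : ℝ) : EReal) < ⨆ i, H n i z := lt_of_lt_of_le hlt h2
      have hr1' : (⨆ i, H n i z) < ((r : ℝ) : EReal) := by exact_mod_cast hr1
      exact absurd (h3.trans hr1') (lt_irrefl _)
  have heq : (fun z => ⨆ y : G z, h y z) = fun z => (M z).toReal := by
    funext z
    rw [key z, EReal.toReal_coe]
  rw [heq]
  exact Mmeas.ereal_toReal

lemma meas_integral_param {Z : Type*} [MeasurableSpace Z] (Q : Z → Measure Z)
    (hQ : ∀ z, IsProbabilityMeasure (Q z))
    (hQmeas : ∀ B : Set Z, MeasurableSet B → Measurable fun z => (Q z B).toReal)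
    (g : Z → ℝ) (hg : Measurable g) : Measurable fun z => ∫ w, g w ∂Q z := by
  have hQm : Measurable Q := by
    apply Measure.measurable_of_measurable_coe
    intro B hB
    have : (fun z => Q z B) = fun z => ENNReal.ofReal ((Q z B).toReal) := by
      funext z
      haveI := hQ z
      rw [ENNReal.ofReal_toReal (measure_ne_top _ _)]
    rw [this]
    exact ENNReal.measurable_ofReal.comp (hQmeas B hB)
  let κ : ProbabilityTheory.Kernel Z Z := ⟨Q, hQm⟩
  haveI : ProbabilityTheory.IsMarkovKernel κ := ⟨fun z => hQ z⟩
  have h := MeasureTheory.StronglyMeasurable.integral_kernel_prod_right (κ := κ)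
    (f := fun (_ : Z) w => g w)
    (show StronglyMeasurable (Function.uncurry fun (_ : Z) w => g w) from
      (hg.comp measurable_snd).stronglyMeasurable)
  exact h.measurable

end Helpers

set_option maxHeartbeats 2000000 in
/-- Lemma (Tf_well): under (B1)-(B6), if `f ∈ V(0,R₀)` then `Tf ∈ ℒ¹(Z;C(X))` and
`Tf ∈ V(0,R₀)`: `Tf` is a Carathéodory function and `p_{K,z}(Tf) ≤ R₀(K,z)` for all
compact `K` and all `z`, where `R₀(K,z) = Σ_t p_{K,z}(l_t)`. -/
theorem stmt14 {l k : ℕ} (X : Set (Euc l)) (Z : Set (Euc k))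
    (hX : MeasurableSet X) (hZ : MeasurableSet Z)
    (β : ℝ) (hβ0 : 0 < β) (hβ1 : β < 1)
    (Q : Z → Measure Z) (hQ : ∀ z, IsProbabilityMeasure (Q z))
    (hQmeas : ∀ B : Set Z, MeasurableSet B → Measurable fun z => (Q z B).toReal)
    (Γ : X × Z → Set X)
    (hΓne : ∀ p, (Γ p).Nonempty) (hΓcpt : ∀ p, IsCompact (Γ p))
    (hΓu : UHC Γ) (hΓl : LHC Γ)
    (U : X → X → Z → ℝ)
    (hUmeas : ∀ x y, Measurable (U x y))
    (hUcont : ∀ z : Z, Continuous fun p : X × X => U p.1 p.2 z)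
    -- (B6)
    (lfam : ℕ → X → Z → ℝ)
    (hl_nonneg : ∀ t x z, 0 ≤ lfam t x z)
    (hl_mem : ∀ t, MemL1C X Z Q (lfam t))
    (hl0 : ∀ x z, |⨆ y : Γ (x, z), U x y z| ≤ lfam 0 x z)
    (hl_rec : ∀ t x z,
      β * ∫ z', (⨆ y : Γ (x, z), lfam t y z') ∂(Q z) ≤ lfam (t+1) x z)
    (hl_sum : ∀ K : Set X, IsCompact K → ∀ z : Z,
      Summable fun t => pKz Q K z (lfam t))

    (f : X → Z → ℝ) (hf : MemL1C X Z Q f)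
    (hfV : ∀ K : Set X, IsCompact K → ∀ z : Z,
      pKz Q K z f ≤ ∑' t, pKz Q K z (lfam t)) :
    MemL1C X Z Q (fun x z => ⨆ y : Γ (x, z), (U x y z + β * ∫ w, f y w ∂(Q z))) ∧
    (∀ K : Set X, IsCompact K → ∀ z : Z,
      pKz Q K z (fun x z' => ⨆ y : Γ (x, z'), (U x y z' + β * ∫ w, f y w ∂(Q z'))) ≤
        ∑' t, pKz Q K z (lfam t)) := by
  classical
  have hsplit : ∀ g : ℕ → ENNReal, ∑' t, g t = g 0 + ∑' t, g (t + 1) := fun g =>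
    tsum_eq_zero_add' ENNReal.summable
  -- basic facts about f
  have fmeas : ∀ x : X, Measurable (f x) := hf.1.1
  have fcont : ∀ z : Z, Continuous fun x : X => f x z := hf.1.2
  have f_int : ∀ (y : X) (z : Z), Integrable (fun w => f y w) (Q z) := by
    intro y z
    have h1 := hf.2 {y} isCompact_singleton z
    have h2 : (fun z' => ⨆ x : ({y} : Set X), |f x z'|) = fun z' => |f y z'| :=
      funext fun z' => iSup_singleton' y fun v => |f v z'|
    rw [h2] at h1
    exact h1.mono' (fmeas y).aestronglyMeasurable
      (Eventually.of_forall fun w => by rw [Real.norm_eq_abs])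
  -- the integral operator
  have Imeas : ∀ y : X, Measurable fun z : Z => ∫ w, f y w ∂Q z := fun y =>
    meas_integral_param Q hQ hQmeas (f y) (fmeas y)
  have Icont : ∀ z : Z, Continuous fun y : X => ∫ w, f y w ∂Q z := fun z =>
    cont_param_integral (Q z) f fmeas fcont (fun C hC => hf.2 C hC z)
  -- sliced hemicontinuity
  have uhc_x : ∀ (z : Z) (a : X) (V : Set X), IsOpen V → Γ (a, z) ⊆ V →
      ∀ᶠ a' in 𝓝 a, Γ (a', z) ⊆ V := fun z a V hV hs =>
    (((continuous_id.prodMk continuous_const).tendsto a).eventually (hΓu (a, z) V hV hs))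
  have lhc_x : ∀ (z : Z) (a : X) (V : Set X), IsOpen V → (Γ (a, z) ∩ V).Nonempty →
      ∀ᶠ a' in 𝓝 a, (Γ (a', z) ∩ V).Nonempty := fun z a V hV hs =>
    (((continuous_id.prodMk continuous_const).tendsto a).eventually (hΓl (a, z) V hV hs))
  have lhc_z : ∀ (x : X) (z : Z) (V : Set X), IsOpen V → (Γ (x, z) ∩ V).Nonempty →
      ∀ᶠ z' in 𝓝 z, (Γ (x, z') ∩ V).Nonempty := fun x z V hV hs =>
    (((continuous_const.prodMk continuous_id).tendsto z).eventually (hΓl (x, z) V hV hs))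
  -- Tf : measurability in z
  have Tfmeas : ∀ x : X,
      Measurable fun z : Z => ⨆ y : Γ (x, z), (U x y z + β * ∫ w, f y w ∂Q z) := by
    intro x
    exact meas_ciSup_corr (fun z => Γ (x, z)) (fun z => hΓne _) (fun z => hΓcpt _)
      (lhc_z x) (fun y z => U x y z + β * ∫ w, f y w ∂Q z)
      (fun y => (hUmeas x y).add ((Imeas y).const_mul β))
      (fun z => (((hUcont z).comp (continuous_const.prodMk continuous_id)).add
        (continuous_const.mul (Icont z))))
  -- Tf : continuity in x
  have Tfcont : ∀ z : Z,
      Continuous fun x : X => ⨆ y : Γ (x, z), (U x y z + β * ∫ w, f y w ∂Q z) := by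
    intro z
    exact berge_cont (fun x => Γ (x, z)) (fun x => hΓne _) (fun x => hΓcpt _)
      (uhc_x z) (lhc_x z) (fun x y => U x y z + β * ∫ w, f y w ∂Q z)
      ((hUcont z).add (continuous_const.mul ((Icont z).comp continuous_snd)))
  -- absolute value removal for the nonnegative lfam
  have habs : ∀ (C : Set X) (t : ℕ) (w : Z),
      (⨆ y : C, |lfam t y w|) = ⨆ y : C, lfam t y w := fun C t w =>
    iSup_congr fun y => abs_of_nonneg (hl_nonneg t _ _)
  have pKz_nonneg : ∀ (K : Set X) (z : Z) (g : X → Z → ℝ), 0 ≤ pKz Q K z g := by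
    intro K z g
    exact integral_nonneg fun w => Real.iSup_nonneg fun y => abs_nonneg _
  -- β times the t-th tail bound
  have key2 : ∀ (t : ℕ) (x : X) (z : Z),
      β * pKz Q (Γ (x, z)) z (lfam t) ≤ lfam (t + 1) x z := by
    intro t x z
    have hcg : (fun z' => ⨆ y : Γ (x, z), |lfam t y z'|) =
        fun z' => ⨆ y : Γ (x, z), lfam t y z' := funext fun z' => habs _ t z'
    show β * (∫ z', (⨆ y : Γ (x, z), |lfam t y z'|) ∂(Q z)) ≤ lfam (t + 1) x z
    rw [hcg]
    exact hl_rec t x z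
  -- pointwise bound on |Tf|
  have key : ∀ (x : X) (z : Z),
      |⨆ y : Γ (x, z), (U x y z + β * ∫ w, f y w ∂Q z)| ≤
        lfam 0 x z + β * ∑' t, pKz Q (Γ (x, z)) z (lfam t) := by
    intro x z
    haveI : Nonempty (Γ (x, z)) := (hΓne (x, z)).to_subtype
    set Sa : ℝ := ∑' t, pKz Q (Γ (x, z)) z (lfam t) with hSa
    have Snn : 0 ≤ Sa := tsum_nonneg fun t => pKz_nonneg _ _ _
    have hIb : ∀ y : Γ (x, z), |∫ w, f y w ∂Q z| ≤ Sa := by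
      intro y
      have h1 : |∫ w, f (y : X) w ∂Q z| ≤ ∫ w, |f (y : X) w| ∂Q z := by
        rw [← Real.norm_eq_abs]
        exact (norm_integral_le_integral_norm _).trans
          (le_of_eq (integral_congr_ae (Eventually.of_forall fun w => Real.norm_eq_abs _)))
      have h2 : (∫ w, |f (y : X) w| ∂Q z) ≤ ∫ w, (⨆ v : Γ (x, z), |f v w|) ∂Q z := by
        apply integral_mono ((f_int y z).abs) (hf.2 _ (hΓcpt (x, z)) z)
        intro w
        exact le_ciSup (bdd_range_compact_s14 (hΓcpt (x, z)) ((fcont w).abs)) y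
      have h3 : pKz Q (Γ (x, z)) z f ≤ Sa := hfV _ (hΓcpt (x, z)) z
      exact h1.trans (h2.trans h3)
    have bddU : BddAbove (Set.range fun y : Γ (x, z) => U x y z) :=
      bdd_range_compact_s14 (hΓcpt (x, z))
        ((hUcont z).comp (continuous_const.prodMk continuous_id))
    have bddh : BddAbove (Set.range fun y : Γ (x, z) => U x y z + β * ∫ w, f y w ∂Q z) :=
      bdd_range_compact_s14 (hΓcpt (x, z))
        (((hUcont z).comp (continuous_const.prodMk continuous_id)).add
          (continuous_const.mul (Icont z)))
    have upper : (⨆ y : Γ (x, z), (U x y z + β * ∫ w, f y w ∂Q z)) ≤ lfam 0 x z + β * Sa := by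
      refine ciSup_le fun y => ?_
      have hU : U x y z ≤ lfam 0 x z :=
        (le_ciSup bddU y).trans ((le_abs_self _).trans (hl0 x z))
      have hI : β * ∫ w, f y w ∂Q z ≤ β * Sa :=
        mul_le_mul_of_nonneg_left ((le_abs_self _).trans (hIb y)) hβ0.le
      linarith
    have lower : -(lfam 0 x z + β * Sa) ≤ ⨆ y : Γ (x, z), (U x y z + β * ∫ w, f y w ∂Q z) := by
      have h5 : ∀ y : Γ (x, z),
          U x y z ≤ (⨆ y : Γ (x, z), (U x y z + β * ∫ w, f y w ∂Q z)) + β * Sa := by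
        intro y
        have h6 : U x y z + β * ∫ w, f y w ∂Q z ≤
            ⨆ y : Γ (x, z), (U x y z + β * ∫ w, f y w ∂Q z) := le_ciSup bddh y
        have h7 : -Sa ≤ ∫ w, f y w ∂Q z := (abs_le.1 (hIb y)).1
        have h8 : β * (-Sa) ≤ β * ∫ w, f y w ∂Q z := mul_le_mul_of_nonneg_left h7 hβ0.le
        linarith
      have hsup : (⨆ y : Γ (x, z), U x y z) ≤
          (⨆ y : Γ (x, z), (U x y z + β * ∫ w, f y w ∂Q z)) + β * Sa := ciSup_le h5
      have h9 : -(lfam 0 x z) ≤ ⨆ y : Γ (x, z), U x y z := (abs_le.1 (hl0 x z)).1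
      linarith
    exact abs_le.2 ⟨by linarith, upper⟩
  -- the main estimate for every compact K
  have main : ∀ K : Set X, IsCompact K → ∀ z : Z,
      Integrable (fun z' => ⨆ x : K, |⨆ y : Γ (x, z'), (U x y z' + β * ∫ w, f y w ∂Q z')|)
        (Q z) ∧
      pKz Q K z (fun x z' => ⨆ y : Γ (x, z'), (U x y z' + β * ∫ w, f y w ∂Q z')) ≤
        ∑' t, pKz Q K z (lfam t) := by
    intro K hK z
    rcases K.eq_empty_or_nonempty with rfl | hKne
    · constructor
      · have : (fun z' : Z => ⨆ x : (∅ : Set X), |⨆ y : Γ (x, z'),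
            (U x y z' + β * ∫ w, f y w ∂Q z')|) = fun _ => (0 : ℝ) := by
          funext z'
          exact Real.iSup_of_isEmpty _
        rw [this]
        exact integrable_zero _ _ _
      · have h0 : pKz Q (∅ : Set X) z (fun x z' => ⨆ y : Γ (x, z'),
            (U x y z' + β * ∫ w, f y w ∂Q z')) = 0 := by
          show (∫ z', (⨆ x : (∅ : Set X), |_|) ∂(Q z)) = 0
          have : (fun z' : Z => ⨆ x : (∅ : Set X), |⨆ y : Γ (x, z'),
              (U x y z' + β * ∫ w, f y w ∂Q z')|) = fun _ => (0 : ℝ) := by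
            funext z'
            exact Real.iSup_of_isEmpty _
          rw [this]
          exact integral_zero _ _
        rw [h0]
        exact tsum_nonneg fun t => pKz_nonneg _ _ _
    · haveI : Nonempty K := hKne.to_subtype
      set F : Z → ℝ := fun z' => ⨆ x : K, |⨆ y : Γ (x, z'), (U x y z' + β * ∫ w, f y w ∂Q z')|
        with hF
      have Fnn : ∀ z', 0 ≤ F z' := fun z' => Real.iSup_nonneg fun x => abs_nonneg _
      have Fmeas : Measurable F := by
        apply meas_ciSup_corr (fun _ : Z => K) (fun _ => hKne) (fun _ => hK)
          (fun z V hV hne => Eventually.of_forall fun _ => hne)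
          (fun y z' => |⨆ w' : Γ (y, z'), (U y w' z' + β * ∫ w, f w' w ∂Q z')|)
          (fun y => (Tfmeas y).abs) (fun z' => (Tfcont z').abs)
      set SL : ℕ → Z → ℝ := fun s z' => ⨆ x : K, lfam s x z' with hSL
      have IntSL : ∀ s, Integrable (SL s) (Q z) := by
        intro s
        have h1 := (hl_mem s).2 K hK z
        have h2 : (fun z' => ⨆ x : K, |lfam s x z'|) = SL s :=
          funext fun z' => habs K s z'
        rwa [h2] at h1
      have SLnn : ∀ s z', 0 ≤ SL s z' := fun s z' =>
        Real.iSup_nonneg fun x => hl_nonneg s _ _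
      have bddSL : ∀ (s : ℕ) (z' : Z), BddAbove (Set.range fun x : K => lfam s x z') :=
        fun s z' => bdd_range_compact_s14 hK ((hl_mem s).1.2 z')
      have bddTf : ∀ z' : Z, BddAbove (Set.range fun x : K =>
          |⨆ y : Γ (x, z'), (U x y z' + β * ∫ w, f y w ∂Q z')|) :=
        fun z' => bdd_range_compact_s14 hK (Tfcont z').abs
      have monoOfReal : Monotone ENNReal.ofReal := fun _ _ h => ENNReal.ofReal_le_ofReal h
      -- pointwise ENNReal bound
      have step1 : ∀ z' : Z, ENNReal.ofReal (F z') ≤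
          ENNReal.ofReal (SL 0 z') + ∑' t, ENNReal.ofReal (SL (t + 1) z') := by
        intro z'
        rw [hF]
        rw [Monotone.map_ciSup_of_continuousAt ENNReal.continuous_ofReal.continuousAt
          monoOfReal (bddTf z')]
        refine iSup_le fun x => ?_
        have hkey := key x z'
        set Sa : ℝ := ∑' t, pKz Q (Γ (x, z')) z' (lfam t) with hSa
        have Sann : ∀ t, 0 ≤ pKz Q (Γ ((x : X), z')) z' (lfam t) := fun t => pKz_nonneg _ _ _
        have Snn : 0 ≤ Sa := tsum_nonneg Sann
        calc ENNReal.ofReal (|⨆ y : Γ ((x : X), z'), (U x y z' + β * ∫ w, f y w ∂Q z')|)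
            ≤ ENNReal.ofReal (lfam 0 x z' + β * Sa) := ENNReal.ofReal_le_ofReal hkey
          _ = ENNReal.ofReal (lfam 0 x z') + ENNReal.ofReal (β * Sa) :=
              ENNReal.ofReal_add (hl_nonneg 0 _ _) (mul_nonneg hβ0.le Snn)
          _ ≤ ENNReal.ofReal (SL 0 z') + ∑' t, ENNReal.ofReal (SL (t + 1) z') := by
              refine add_le_add (ENNReal.ofReal_le_ofReal (le_ciSup (bddSL 0 z') x)) ?_
              have hmul : β * Sa = ∑' t, β * pKz Q (Γ ((x : X), z')) z' (lfam t) := by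
                rw [hSa, tsum_mul_left]
              rw [hmul, ENNReal.ofReal_tsum_of_nonneg
                (fun t => mul_nonneg hβ0.le (Sann t))
                ((hl_sum _ (hΓcpt ((x : X), z')) z').mul_left β)]
              refine ENNReal.tsum_le_tsum fun t => ?_
              exact (ENNReal.ofReal_le_ofReal (key2 t x z')).trans
                (ENNReal.ofReal_le_ofReal (le_ciSup (bddSL (t + 1) z') x))
      -- relate pKz of lfam with SL
      have hpk : ∀ s : ℕ, pKz Q K z (lfam s) = ∫ z', SL s z' ∂Q z := by
        intro s
        show (∫ z', (⨆ x : K, |lfam s x z'|) ∂(Q z)) = _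
        exact integral_congr_ae (Eventually.of_forall fun z' => habs K s z')
      have aemSL : ∀ s, AEMeasurable (fun z' => ENNReal.ofReal (SL s z')) (Q z) := fun s =>
        ENNReal.measurable_ofReal.comp_aemeasurable (IntSL s).aestronglyMeasurable.aemeasurable
      -- main lintegral chain
      have chain : (∫⁻ z', ENNReal.ofReal (F z') ∂Q z) ≤
          ENNReal.ofReal (∑' t, pKz Q K z (lfam t)) := by
        calc (∫⁻ z', ENNReal.ofReal (F z') ∂Q z)
            ≤ ∫⁻ z', (ENNReal.ofReal (SL 0 z') + ∑' t, ENNReal.ofReal (SL (t + 1) z')) ∂Q z :=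
              lintegral_mono step1
          _ = (∫⁻ z', ENNReal.ofReal (SL 0 z') ∂Q z) +
              ∫⁻ z', (∑' t, ENNReal.ofReal (SL (t + 1) z')) ∂Q z :=
              lintegral_add_left' (aemSL 0) _
          _ = (∫⁻ z', ENNReal.ofReal (SL 0 z') ∂Q z) +
              ∑' t, ∫⁻ z', ENNReal.ofReal (SL (t + 1) z') ∂Q z := by
              rw [lintegral_tsum fun t => aemSL (t + 1)]
          _ = ENNReal.ofReal (pKz Q K z (lfam 0)) +
              ∑' t, ENNReal.ofReal (pKz Q K z (lfam (t + 1))) := by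
              congr 1
              · rw [hpk 0, ofReal_integral_eq_lintegral_ofReal (IntSL 0)
                  (Eventually.of_forall fun z' => SLnn 0 z')]
              · congr 1
                funext t
                rw [hpk (t + 1), ofReal_integral_eq_lintegral_ofReal (IntSL (t + 1))
                  (Eventually.of_forall fun z' => SLnn (t + 1) z')]
          _ = ∑' t, ENNReal.ofReal (pKz Q K z (lfam t)) :=
              (hsplit fun t => ENNReal.ofReal (pKz Q K z (lfam t))).symm
          _ = ENNReal.ofReal (∑' t, pKz Q K z (lfam t)) :=
              (ENNReal.ofReal_tsum_of_nonneg (fun t => pKz_nonneg _ _ _) (hl_sum K hK z)).symm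
      have hfin : (∫⁻ z', ENNReal.ofReal (F z') ∂Q z) < ⊤ :=
        lt_of_le_of_lt chain ENNReal.ofReal_lt_top
      have IntF : Integrable F (Q z) := by
        refine ⟨Fmeas.aestronglyMeasurable, ?_⟩
        rw [hasFiniteIntegral_iff_norm]
        have : (fun z' => ENNReal.ofReal ‖F z'‖) = fun z' => ENNReal.ofReal (F z') := by
          funext z'
          rw [Real.norm_eq_abs, abs_of_nonneg (Fnn z')]
        rw [this]
        exact hfin
      refine ⟨IntF, ?_⟩
      show (∫ z', F z' ∂(Q z)) ≤ ∑' t, pKz Q K z (lfam t)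
      rw [integral_eq_lintegral_of_nonneg_ae (Eventually.of_forall Fnn)
        Fmeas.aestronglyMeasurable]
      exact ENNReal.toReal_le_of_le_ofReal (tsum_nonneg fun t => pKz_nonneg _ _ _) chain
  exact ⟨⟨⟨Tfmeas, Tfcont⟩, fun K hK z => (main K hK z).1⟩, fun K hK z => (main K hK z).2⟩
end
end

section
/- Let assumptions (B1)–(B5) hold and suppose there exist l₀ ∈ ℒ¹(Z; C(X)) with |ψ| ≤ l₀ (where ψ(x,z) = max_{y∈Γ(x,z)} U(x,y,z)) and α ≥ 0 with αβ < 1 such that ∫_Z max_{y∈Γ(x,z)} l₀(y,z') Q_z(dz') ≤ α l₀(x,z) for all x ∈ X, z ∈ Z. Then assumption (B6) holds with l_t = (αβ)^t l₀, the series w = Σ_t l_t equals l₀/(1−αβ), and R₀(K,z) = p_{K,z}(l₀)/(1−αβ). -/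
open MeasureTheory Filter Topology

noncomputable section

/-- Proposition (sufficient condition for (B6)): if `l₀ ∈ ℒ¹(Z;C(X))` dominates `|ψ|` and
`∫ max_{y∈Γ(x,z)} l₀(y,z') Q_z(dz') ≤ α l₀(x,z)` with `αβ < 1`, then (B6) holds with
`l_t = (αβ)^t l₀`, `Σ_t l_t = l₀/(1−αβ)` and `R₀(K,z) = p_{K,z}(l₀)/(1−αβ)`. -/
theorem stmt16 {l k : ℕ} (X : Set (Euc l)) (Z : Set (Euc k))
    (hX : MeasurableSet X) (hZ : MeasurableSet Z)
    (β : ℝ) (hβ0 : 0 < β) (hβ1 : β < 1)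
    (Q : Z → Measure Z) (hQ : ∀ z, IsProbabilityMeasure (Q z))
    (hQmeas : ∀ B : Set Z, MeasurableSet B → Measurable fun z => (Q z B).toReal)
    (Γ : X × Z → Set X)
    (hΓne : ∀ p, (Γ p).Nonempty) (hΓcpt : ∀ p, IsCompact (Γ p))
    (hΓu : UHC Γ) (hΓl : LHC Γ)
    (U : X → X → Z → ℝ)
    (hUmeas : ∀ x y, Measurable (U x y))
    (hUcont : ∀ z : Z, Continuous fun p : X × X => U p.1 p.2 z)
    (l₀ : X → Z → ℝ) (hl₀_nonneg : ∀ x z, 0 ≤ l₀ x z)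
    (hl₀_mem : MemL1C X Z Q l₀)
    (hψ : ∀ x z, |⨆ y : Γ (x, z), U x y z| ≤ l₀ x z)
    (α : ℝ) (hα : 0 ≤ α) (hαβ : α * β < 1)
    (hdom : ∀ x : X, ∀ z : Z,
      (∫ z', (⨆ y : Γ (x, z), l₀ y z') ∂(Q z)) ≤ α * l₀ x z) :
    -- (B6) holds with `l_t = (αβ)^t l₀`
    (∀ t, MemL1C X Z Q (fun x z => (α * β)^t * l₀ x z)) ∧
    (∀ t : ℕ, ∀ x : X, ∀ z : Z,
      β * ∫ z', (⨆ y : Γ (x, z), (α * β)^t * l₀ y z') ∂(Q z) ≤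
        (α * β)^(t+1) * l₀ x z) ∧
    (∀ K : Set X, IsCompact K → ∀ z : Z,
      Summable fun t => pKz Q K z (fun x z' => (α * β)^t * l₀ x z')) ∧
    -- the series `w = Σ_t l_t` equals `l₀/(1−αβ)`
    (∀ x : X, ∀ z : Z, ∑' t : ℕ, (α * β)^t * l₀ x z = l₀ x z / (1 - α * β)) ∧
    -- `R₀(K,z) = p_{K,z}(l₀)/(1−αβ)`
    (∀ K : Set X, IsCompact K → ∀ z : Z,
      ∑' t : ℕ, pKz Q K z (fun x z' => (α * β)^t * l₀ x z') =
        pKz Q K z l₀ / (1 - α * β)) := by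
  have hc : ∀ t : ℕ, (0:ℝ) ≤ (α * β)^t := fun t =>
    pow_nonneg (mul_nonneg hα hβ0.le) t
  have hαβ0 : 0 ≤ α * β := mul_nonneg hα hβ0.le
  -- pKz of a scaled function
  have hpKz : ∀ (c : ℝ), 0 ≤ c → ∀ K : Set X, ∀ z : Z,
      pKz Q K z (fun x z' => c * l₀ x z') = c * pKz Q K z l₀ := by
    intro c hc K z
    unfold pKz
    rw [← integral_const_mul]
    congr 1; funext z'
    rw [Real.mul_iSup_of_nonneg hc]
    congr 1; funext x
    rw [abs_mul, abs_of_nonneg hc]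
  have hsupabs : ∀ (c : ℝ), 0 ≤ c → ∀ K : Set X, ∀ z' : Z,
      (⨆ x : K, |c * l₀ x z'|) = c * ⨆ x : K, |l₀ x z'| := by
    intro c hc K z'
    rw [Real.mul_iSup_of_nonneg hc]
    congr 1; funext x
    rw [abs_mul, abs_of_nonneg hc]
  refine ⟨?_, ?_, ?_, ?_, ?_⟩
  · intro t
    refine ⟨⟨fun x => (hl₀_mem.1.1 x).const_mul _,
      fun z => continuous_const.mul (hl₀_mem.1.2 z)⟩, ?_⟩
    intro K hK z
    have := (hl₀_mem.2 K hK z).const_mul ((α * β)^t)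
    refine this.congr ?_
    filter_upwards with z'
    exact (hsupabs _ (hc t) K z').symm
  · intro t x z
    have h1 : (∫ z', (⨆ y : Γ (x, z), (α * β)^t * l₀ y z') ∂(Q z))
        = (α * β)^t * ∫ z', (⨆ y : Γ (x, z), l₀ y z') ∂(Q z) := by
      rw [← integral_const_mul]
      congr 1; funext z'
      rw [Real.mul_iSup_of_nonneg (hc t)]
    rw [h1]
    calc β * ((α * β)^t * ∫ z', (⨆ y : Γ (x, z), l₀ y z') ∂(Q z))
        ≤ β * ((α * β)^t * (α * l₀ x z)) := by
          apply mul_le_mul_of_nonneg_left _ hβ0.le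
          exact mul_le_mul_of_nonneg_left (hdom x z) (hc t)
      _ = (α * β)^(t+1) * l₀ x z := by ring
  · intro K hK z
    have heq : (fun t : ℕ => pKz Q K z (fun x z' => (α * β)^t * l₀ x z'))
        = fun t => (α * β)^t * pKz Q K z l₀ := by
      funext t; exact hpKz _ (hc t) K z
    rw [heq]
    exact (summable_geometric_of_lt_one hαβ0 hαβ).mul_right _
  · intro x z
    rw [tsum_mul_right, tsum_geometric_of_lt_one hαβ0 hαβ]
    rw [div_eq_mul_inv, mul_comm, inv_eq_one_div]
  · intro K hK z
    have heq : (fun t : ℕ => pKz Q K z (fun x z' => (α * β)^t * l₀ x z'))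
        = fun t => (α * β)^t * pKz Q K z l₀ := by
      funext t; exact hpKz _ (hc t) K z
    rw [heq, tsum_mul_right, tsum_geometric_of_lt_one hαβ0 hαβ]
    rw [div_eq_mul_inv, mul_comm, inv_eq_one_div]
end
end

section
/- In the stochastic endogenous growth model with CRRA-type utility U(c,ℓ) = c^{1−σ} ℓ^{ψ(1−σ)}/(1−σ), 0 ≤ σ < 1, budget constraint c + k' + h' ≤ zAk^α(nh)^{1−α} + (1−δ_k)k + (1−δ_h)h, leisure constraint ℓ + n ≤ 1, and Markov shocks ln z_{t+1} = ρ ln z_t + ln w_{t+1} with 0 ≤ ρ < 1, z ≥ 1, w ≥ 1 i.i.d. with distribution μ: the optimal value of the auxiliary problem max g(k',h')^{1−σ} subject to k' + h' ≤ z·g(k,h), k',h' ≥ 0, where g(k,h) = Ak^α(nh)^{1−α} + (1−δ)(k+h) and δ = min{δ_k, δ_h}, is attained at k' = αz·g(k,h), h' = (1−α)z·g(k,h) with optimal value γ^{1−σ} z^{1−σ} g(k,h)^{1−σ}, where γ = Aα^α(1−α)^{1−α} + (1−δ). Consequently, the function l₀(k,h,z) = z^{(1−σ)/(1−ρ)}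 g(k,h)^{1−σ}/(1−σ) satisfies β ∫_Z max_{(k',h',c,n,ℓ)∈Γ(k,h,z)} l₀(k',h',z') Q_z(dz') ≤ βγ^{1−σ}Θ · l₀(k,h,z), where Θ = E(w^{(1−σ)/(1−ρ)}). -/
open MeasureTheory Real

noncomputable section

lemma amgm2 {x y α : ℝ} (hx : 0 ≤ x) (hy : 0 ≤ y) (hα0 : 0 < α) (hα1 : α < 1) :
    x ^ α * y ^ (1 - α) ≤ α ^ α * (1 - α) ^ (1 - α) * (x + y) := by
  have h1α : (0:ℝ) < 1 - α := by linarith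
  have h := Real.geom_mean_le_arith_mean2_weighted hα0.le h1α.le
    (div_nonneg hx hα0.le) (div_nonneg hy h1α.le) (by ring)
  have hxx : α * (x / α) + (1 - α) * (y / (1 - α)) = x + y := by
    field_simp
  rw [hxx] at h
  have hda : (x / α) ^ α = x ^ α / α ^ α := Real.div_rpow hx hα0.le α
  have hdb : (y / (1 - α)) ^ (1 - α) = y ^ (1 - α) / (1 - α) ^ (1 - α) :=
    Real.div_rpow hy h1α.le _
  rw [hda, hdb] at h
  have hαα : (0:ℝ) < α ^ α := Real.rpow_pos_of_pos hα0 _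
  have hββ : (0:ℝ) < (1 - α) ^ (1 - α) := Real.rpow_pos_of_pos h1α _
  have := mul_le_mul_of_nonneg_left h (by positivity : (0:ℝ) ≤ α ^ α * (1 - α) ^ (1 - α))
  calc x ^ α * y ^ (1 - α)
      = α ^ α * (1 - α) ^ (1 - α) * (x ^ α / α ^ α * (y ^ (1 - α) / (1 - α) ^ (1 - α))) := by
        field_simp
    _ ≤ α ^ α * (1 - α) ^ (1 - α) * (x + y) := this
/-- Endogenous growth model: the auxiliary problem `max g(k',h')^{1−σ}` subject to
`k'+h' ≤ z·g(k,h)`, `k',h' ≥ 0` is solved by `k' = αz·g(k,h)`, `h' = (1−α)z·g(k,h)` with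
value `γ^{1−σ} z^{1−σ} g(k,h)^{1−σ}`; consequently
`l₀(k,h,z) = z^{(1−σ)/(1−ρ)} g(k,h)^{1−σ}/(1−σ)` satisfies
`β ∫ max_{Γ(k,h,z)} l₀ dQ_z ≤ βγ^{1−σ}Θ · l₀(k,h,z)`. -/
theorem stmt17 (A α σ ρ δ β Θ : ℝ)
    (hA : 0 < A) (hα0 : 0 < α) (hα1 : α < 1)
    (hσ0 : 0 ≤ σ) (hσ1 : σ < 1) (hρ0 : 0 ≤ ρ) (hρ1 : ρ < 1)
    (hδ0 : 0 ≤ δ) (hδ1 : δ ≤ 1) (hβ0 : 0 < β) (hβ1 : β < 1)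
    (g : ℝ → ℝ → ℝ) (hg : ∀ k h, g k h = A * k ^ α * h ^ (1 - α) + (1 - δ) * (k + h))
    (γ : ℝ) (hγ : γ = A * α ^ α * (1 - α) ^ (1 - α) + (1 - δ))
    (l₀ : ℝ → ℝ → ℝ → ℝ)
    (hl₀ : ∀ k h z, l₀ k h z = z ^ ((1 - σ) / (1 - ρ)) * g k h ^ (1 - σ) / (1 - σ))
    -- the shock space is `Z = [1,∞)` with transition `Q` and moment `Θ = E(w^{(1−σ)/(1−ρ)})`
    (Q : ℝ → Measure ℝ) (hQ : ∀ z, IsProbabilityMeasure (Q z))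
    (hQsupp : ∀ z, ∀ᵐ z' ∂(Q z), 1 ≤ z')
    (hΘ : 0 ≤ Θ)
    (hmoment : ∀ z, 1 ≤ z →
      ∫ z', z' ^ ((1 - σ) / (1 - ρ)) ∂(Q z) = z ^ (ρ * (1 - σ) / (1 - ρ)) * Θ)
    -- the (projected) feasible correspondence
    (Γ : ℝ → ℝ → ℝ → Set (ℝ × ℝ))
    (hΓ : ∀ k h z, Γ k h z ⊆ {p : ℝ × ℝ | 0 ≤ p.1 ∧ 0 ≤ p.2 ∧ p.1 + p.2 ≤ z * g k h})
    (k h z : ℝ) (hk : 0 ≤ k) (hh : 0 ≤ h) (hz : 1 ≤ z)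
    (hint : Integrable (fun z' => ⨆ p : Γ k h z, l₀ p.1.1 p.1.2 z') (Q z)) :
    -- the maximizer and the optimal value of the auxiliary problem
    ((∀ k' h' : ℝ, 0 ≤ k' → 0 ≤ h' → k' + h' ≤ z * g k h →
        g k' h' ^ (1 - σ) ≤ γ ^ (1 - σ) * z ^ (1 - σ) * g k h ^ (1 - σ)) ∧
      (0 ≤ α * (z * g k h) ∧ 0 ≤ (1 - α) * (z * g k h) ∧
        α * (z * g k h) + (1 - α) * (z * g k h) ≤ z * g k h) ∧
      g (α * (z * g k h)) ((1 - α) * (z * g k h)) ^ (1 - σ) =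
        γ ^ (1 - σ) * z ^ (1 - σ) * g k h ^ (1 - σ)) ∧
    -- the contraction estimate on `l₀`
    β * ∫ z', (⨆ p : Γ k h z, l₀ p.1.1 p.1.2 z') ∂(Q z) ≤
      β * γ ^ (1 - σ) * Θ * l₀ k h z := by
  have h1σ : (0:ℝ) < 1 - σ := by linarith
  have h1ρ : (0:ℝ) < 1 - ρ := by linarith
  have h1α : (0:ℝ) < 1 - α := by linarith
  have h1δ : (0:ℝ) ≤ 1 - δ := by linarith
  have hz0 : (0:ℝ) < z := lt_of_lt_of_le one_pos hz
  have hgnn : ∀ a b : ℝ, 0 ≤ a → 0 ≤ b → 0 ≤ g a b := by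
    intro a b ha hb
    rw [hg]
    have h1 : 0 ≤ A * a ^ α * b ^ (1 - α) :=
      mul_nonneg (mul_nonneg hA.le (Real.rpow_nonneg ha α)) (Real.rpow_nonneg hb (1 - α))
    have h2 : 0 ≤ (1 - δ) * (a + b) := mul_nonneg (by linarith) (by linarith)
    linarith
  have hG : 0 ≤ g k h := hgnn k h hk hh
  have hM : 0 ≤ z * g k h := mul_nonneg hz0.le hG
  have hγ0 : 0 < γ := by
    rw [hγ]
    have h1 : 0 < A * α ^ α * (1 - α) ^ (1 - α) :=
      mul_pos (mul_pos hA (Real.rpow_pos_of_pos hα0 _)) (Real.rpow_pos_of_pos h1α _)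
    linarith
  -- part 1a
  have key : ∀ k' h' : ℝ, 0 ≤ k' → 0 ≤ h' → k' + h' ≤ z * g k h →
      g k' h' ^ (1 - σ) ≤ γ ^ (1 - σ) * z ^ (1 - σ) * g k h ^ (1 - σ) := by
    intro k' h' hk' hh' hsum
    have hgm := amgm2 hk' hh' hα0 hα1
    have hineq : g k' h' ≤ γ * (z * g k h) := by
      rw [hg, hγ]
      have hc : (0:ℝ) ≤ α ^ α * (1 - α) ^ (1 - α) := by positivity
      nlinarith [mul_le_mul_of_nonneg_left hgm hA.le,
        mul_le_mul_of_nonneg_left hsum (mul_nonneg hA.le hc),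
        mul_le_mul_of_nonneg_left hsum h1δ]
    calc g k' h' ^ (1 - σ) ≤ (γ * (z * g k h)) ^ (1 - σ) :=
          Real.rpow_le_rpow (hgnn k' h' hk' hh') hineq h1σ.le
      _ = γ ^ (1 - σ) * z ^ (1 - σ) * g k h ^ (1 - σ) := by
          rw [Real.mul_rpow hγ0.le hM, Real.mul_rpow hz0.le hG, mul_assoc]
  -- part 1c
  have hMM : (z * g k h) ^ α * (z * g k h) ^ (1 - α) = z * g k h := by
    rw [← Real.rpow_add' hM (by norm_num)]
    norm_num
  have hval : g (α * (z * g k h)) ((1 - α) * (z * g k h)) = γ * (z * g k h) := by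
    rw [hg, hγ, Real.mul_rpow hα0.le hM, Real.mul_rpow h1α.le hM]
    linear_combination (A * α ^ α * (1 - α) ^ (1 - α)) * hMM
  refine ⟨⟨key, ⟨mul_nonneg hα0.le hM, mul_nonneg h1α.le hM, le_of_eq (by ring)⟩, ?_⟩, ?_⟩
  · rw [hval, Real.mul_rpow hγ0.le hM, Real.mul_rpow hz0.le hG, mul_assoc]
  -- part 2
  set E : ℝ := (1 - σ) / (1 - ρ) with hE
  set C : ℝ := γ ^ (1 - σ) * z ^ (1 - σ) * g k h ^ (1 - σ) / (1 - σ) with hC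
  have hC0 : 0 ≤ C := by
    rw [hC]
    have := Real.rpow_nonneg hγ0.le (1 - σ)
    have := Real.rpow_nonneg hz0.le (1 - σ)
    have := Real.rpow_nonneg hG (1 - σ)
    positivity
  have hterm : ∀ z' : ℝ, 1 ≤ z' → ∀ p : ↥(Γ k h z),
      l₀ p.1.1 p.1.2 z' ≤ C * z' ^ E := by
    intro z' hz1 p
    obtain ⟨⟨k', h'⟩, hp⟩ := p
    obtain ⟨hk', hh', hsum⟩ := hΓ k h z hp
    have hz'0 : (0:ℝ) < z' := lt_of_lt_of_le one_pos hz1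
    have hz'E : 0 ≤ z' ^ E := Real.rpow_nonneg hz'0.le _
    have hkk := key k' h' hk' hh' hsum
    simp only
    rw [hl₀, hC]
    rw [div_mul_eq_mul_div, mul_comm (γ ^ (1 - σ) * z ^ (1 - σ) * g k h ^ (1 - σ)) (z' ^ E),
      ← div_mul_eq_mul_div, ← div_mul_eq_mul_div]
    gcongr
  have hRHS0 : 0 ≤ β * γ ^ (1 - σ) * Θ * l₀ k h z := by
    rw [hl₀]
    apply mul_nonneg (mul_nonneg (mul_nonneg hβ0.le (Real.rpow_nonneg hγ0.le _)) hΘ)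
    exact div_nonneg (mul_nonneg (Real.rpow_nonneg hz0.le _) (Real.rpow_nonneg hG _)) h1σ.le
  by_cases hex : ∃ p ∈ Γ k h z, 0 < g p.1 p.2
  · obtain ⟨p₀, hp₀, hgp₀⟩ := hex
    set c : ℝ := g p₀.1 p₀.2 ^ (1 - σ) / (1 - σ) with hc
    have hcpos : 0 < c := div_pos (Real.rpow_pos_of_pos hgp₀ _) h1σ
    have hE0 : 0 ≤ E := div_nonneg h1σ.le h1ρ.le
    have hmeas : AEStronglyMeasurable (fun z' : ℝ => z' ^ E) (Q z) :=
      (Real.continuous_rpow_const hE0).aestronglyMeasurable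
    have hint2 : Integrable (fun z' : ℝ => z' ^ E) (Q z) := by
      refine (hint.const_mul c⁻¹).mono' hmeas ?_
      filter_upwards [hQsupp z] with z' hz1
      have hz'0 : (0:ℝ) < z' := lt_of_lt_of_le one_pos hz1
      have hbdd : BddAbove (Set.range fun p : ↥(Γ k h z) => l₀ p.1.1 p.1.2 z') := by
        refine ⟨C * z' ^ E, ?_⟩
        rintro x ⟨p, rfl⟩
        exact hterm z' hz1 p
      have hle : c * z' ^ E ≤ ⨆ p : ↥(Γ k h z), l₀ p.1.1 p.1.2 z' := by
        have := le_ciSup hbdd (⟨p₀, hp₀⟩ : ↥(Γ k h z))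
        calc c * z' ^ E = l₀ p₀.1 p₀.2 z' := by rw [hl₀, hc]; ring
          _ ≤ _ := this
      rw [Real.norm_eq_abs, abs_of_nonneg (Real.rpow_nonneg hz'0.le _)]
      rw [le_inv_mul_iff₀ hcpos]
      exact hle
    have hbound : ∀ᵐ z' ∂(Q z),
        (⨆ p : ↥(Γ k h z), l₀ p.1.1 p.1.2 z') ≤ C * z' ^ E := by
      filter_upwards [hQsupp z] with z' hz1
      exact Real.iSup_le (hterm z' hz1)
        (mul_nonneg hC0 (Real.rpow_nonneg (lt_of_lt_of_le one_pos hz1).le _))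
    have hIle : (∫ z', (⨆ p : ↥(Γ k h z), l₀ p.1.1 p.1.2 z') ∂(Q z)) ≤
        ∫ z', C * z' ^ E ∂(Q z) :=
      integral_mono_ae hint (hint2.const_mul C) hbound
    have hIC : (∫ z', C * z' ^ E ∂(Q z)) = C * (z ^ (ρ * (1 - σ) / (1 - ρ)) * Θ) := by
      rw [integral_const_mul, hmoment z hz]
    have hzz : z ^ (1 - σ) * z ^ (ρ * (1 - σ) / (1 - ρ)) = z ^ E := by
      rw [← Real.rpow_add hz0]
      congr 1
      rw [hE]
      field_simp
      ring
    calc β * ∫ z', (⨆ p : ↥(Γ k h z), l₀ p.1.1 p.1.2 z') ∂(Q z)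
        ≤ β * (C * (z ^ (ρ * (1 - σ) / (1 - ρ)) * Θ)) := by
          rw [← hIC]; exact mul_le_mul_of_nonneg_left hIle hβ0.le
      _ = β * γ ^ (1 - σ) * Θ * l₀ k h z := by
          rw [hl₀, hC]
          linear_combination (β * γ ^ (1 - σ) * Θ * g k h ^ (1 - σ) / (1 - σ)) * hzz
  · push_neg at hex
    have hzero : (fun z' : ℝ => ⨆ p : ↥(Γ k h z), l₀ p.1.1 p.1.2 z') = fun _ => (0:ℝ) := by
      funext z'
      have hall : ∀ p : ↥(Γ k h z), l₀ p.1.1 p.1.2 z' = 0 := by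
        rintro ⟨⟨k', h'⟩, hp⟩
        obtain ⟨hk', hh', _⟩ := hΓ k h z hp
        have hg0 : g k' h' = 0 := le_antisymm (hex (k', h') hp) (hgnn k' h' hk' hh')
        simp only
        rw [hl₀, hg0, Real.zero_rpow (by linarith : (1:ℝ) - σ ≠ 0)]
        simp
      have : (⨆ p : ↥(Γ k h z), l₀ p.1.1 p.1.2 z') = ⨆ _ : ↥(Γ k h z), (0:ℝ) :=
        iSup_congr hall
      rw [this, Real.iSup_const_zero]
    rw [hzero, integral_zero, mul_zero]
    exact hRHS0
end
end
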